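/- arXiv:2101.00050 — 7 statements merged into one kernel-verified Lean document; each statement's English description precedes it below -/
import Mathlib

section
/- Let S be a tree and T a convex subtree of S containing no leaves of S. Then the family of sets { lvs_S(s) : s ∈ cvr_S(T) } is a partition of lvs_S(sup T), where sup T is the largest element of T. -/
/-- A leaf of a tree: an element with no immediate predecessor. -/
def IsLeaf {α : Type*} [PartialOrder α] (s : α) : Prop := ∀ u : α, ¬ u ⋖ s

/-- `lvsUnder t`: the set of leaves below `t`. -/
def lvsUnder {α : Type*} [PartialOrder α] (t : α) : Set α := {s | IsLeaf s ∧ s ≤ t}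

/-- `cvrSet T`: the cover of a subset `T`, the immediate predecessors of elements of `T`
that are not themselves in `T`. -/
def cvrSet {α : Type*} [PartialOrder α] (T : Set α) : Set α :=
  {s | s ∉ T ∧ ∃ x ∈ T, s ⋖ x}

lemma exists_leaf_le {α : Type*} [PartialOrder α] [Finite α] (s : α) :
    ∃ u, IsLeaf u ∧ u ≤ s := by
  obtain ⟨u, hu, hmin⟩ := (wellFounded_lt (α := α)).has_min {w | w ≤ s} ⟨s, le_rfl⟩
  exact ⟨u, fun v hv => hmin v (hv.le.trans hu) hv.lt, hu⟩

lemma exists_cov_between {α : Type*} [PartialOrder α] [Finite α] {u x : α} (h : u < x) :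
    ∃ v, u ≤ v ∧ v ⋖ x := by
  obtain ⟨v, ⟨huv, hvx⟩, hmaxv⟩ :=
    (wellFounded_gt (α := α)).has_min {w | u ≤ w ∧ w < x} ⟨u, le_rfl, h⟩
  exact ⟨v, huv, hvx, fun z hz1 hz2 => hmaxv z ⟨huv.trans hz1.le, hz2⟩ hz1⟩

/-- Let `S` be a tree and `T` a convex subtree of `S` (largest element `m`, order-convex)
containing no leaves of `S`.  Then the family `{ lvs(s) : s ∈ cvr(T) }` is a partition of
`lvs(sup T) = lvs(m)`: the members are nonempty, pairwise disjoint, and their union is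
`lvs(m)`. -/
theorem stmt_5 {α : Type*} [PartialOrder α] [Finite α] [Nonempty α]
    (hsup : ∀ a b : α, ∃ c, a ≤ c ∧ b ≤ c ∧ ∀ d, a ≤ d → b ≤ d → c ≤ d)
    (hcomp : ∀ a b c : α, c ≤ a → c ≤ b → a ≤ b ∨ b ≤ a)
    (T : Set α) (m : α) (hm : m ∈ T) (hmax : ∀ x ∈ T, x ≤ m)
    (hconv : ∀ x ∈ T, ∀ x' ∈ T, ∀ s : α, x < s → s < x' → s ∈ T)
    (hnoleaf : ∀ x ∈ T, ¬ IsLeaf x) :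
    (∀ s ∈ cvrSet T, (lvsUnder s).Nonempty) ∧
    (∀ s ∈ cvrSet T, ∀ s' ∈ cvrSet T, s ≠ s' → lvsUnder s ∩ lvsUnder s' = ∅) ∧
    (⋃ s ∈ cvrSet T, lvsUnder s) = lvsUnder m := by
  refine ⟨?_, ?_, ?_⟩
  · intro s _
    obtain ⟨u, hu, hus⟩ := exists_leaf_le s
    exact ⟨u, hu, hus⟩
  · -- disjointness
    have key : ∀ s ∈ cvrSet T, ∀ s' ∈ cvrSet T, s < s' → False := by
      rintro s ⟨hsT, x, hxT, hsx⟩ s' ⟨hs'T, x', hx'T, hs'x'⟩ hss'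
      rcases hcomp s' x s hss'.le hsx.le with h | h
      · rcases eq_or_lt_of_le h with rfl | hlt
        · exact hs'T hxT
        · exact hsx.2 hss' hlt
      · rcases eq_or_lt_of_le h with rfl | hlt
        · exact hs'T hxT
        · exact hs'T (hconv x hxT x' hx'T s' hlt hs'x'.lt)
    intro s hs s' hs' hne
    ext u
    simp only [Set.mem_inter_iff, Set.mem_empty_iff_false, iff_false]
    rintro ⟨⟨hu, hus⟩, ⟨_, hus'⟩⟩
    rcases hcomp s s' u hus hus' with h | h
    · rcases eq_or_lt_of_le h with rfl | hlt
      · exact hne rfl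
      · exact key s hs s' hs' hlt
    · rcases eq_or_lt_of_le h with rfl | hlt
      · exact hne rfl
      · exact key s' hs' s hs hlt
  · ext u
    simp only [Set.mem_iUnion, exists_prop]
    constructor
    · rintro ⟨s, ⟨hsT, x, hxT, hsx⟩, hu, hus⟩
      exact ⟨hu, hus.trans (hsx.le.trans (hmax x hxT))⟩
    · rintro ⟨hu, hum⟩
      -- take a minimal element x of {t ∈ T | u ≤ t}
      obtain ⟨x, ⟨hxT, hux⟩, hminx⟩ :=
        (wellFounded_lt (α := α)).has_min {t | t ∈ T ∧ u ≤ t} ⟨m, hm, hum⟩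
      have hux' : u < x := lt_of_le_of_ne hux (by rintro rfl; exact hnoleaf u hxT hu)
      obtain ⟨v, huv, hvx⟩ := exists_cov_between hux'
      have hvT : v ∉ T := fun hvT => hminx v ⟨hvT, huv⟩ hvx.lt
      exact ⟨v, ⟨hvT, x, hxT, hvx⟩, hu, huv⟩
end

section
/- Let (S₁, σ, S₀) be a constellation. Define the constellation order ≤^co on the disjoint union S₁ ⊔ S₀ (writing s₁° for elements of S₁ and s₀• for elements of S₀) by: s₁° ≤^co t₁° iff s₁ ≤ t₁ in S₁; s₀• ≤^co s₁° iff s₀ ∈ σ(s₁); s₀• ≤^co t₀• iff s₀ = t₀; and never s₁° ≤^co s₀•. Then (S₁ ⊔ S₀, ≤^co) is a tree, with the elements of S₀ being exactly its leaves. -/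
/-!
Every element of `S₁ ⊔ S₀` lies below the top node of `S₁`, and its upper bounds in `S₁` form
a chain: for a node this is the tree property of `S₁`, for a vertex `v` it is the axiom that
nodes whose subtrees share `v` are comparable. Hence two elements without an order relation
have a least common upper bound in `S₁` (the chain is finite), while comparable elements have
the larger one as supremum. Leaves are the vertices since each `σ s` is nonempty.
-/

/-- A convex subtree: a subset with a largest element that is order-convex. -/
def ConvexSubtree {α : Type*} [PartialOrder α] (X : Set α) : Prop :=
  (∃ m ∈ X, ∀ x ∈ X, x ≤ m) ∧ ∀ x ∈ X, ∀ x' ∈ X, ∀ s : α, x < s → s < x' → s ∈ X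

/-- The constellation order on `S₁ ⊔ S₀` (`inl` = elements of `S₁` as inner nodes/circles,
`inr` = elements of `S₀` as vertices). -/
def coOrd {α β : Type*} [PartialOrder α] (σ : α → Set β) : α ⊕ β → α ⊕ β → Prop
  | Sum.inl s, Sum.inl t => s ≤ t
  | Sum.inr s, Sum.inl t => s ∈ σ t
  | Sum.inr s, Sum.inr t => s = t
  | Sum.inl _, Sum.inr _ => False

open Sum

theorem IsChain.exists_isLeast_of_finite {α : Type*} [PartialOrder α] [Finite α] {T : Set α}
    (hT : IsChain (· ≤ ·) T) (hne : T.Nonempty) : ∃ m, IsLeast T m := by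
  obtain ⟨m, hm⟩ := exists_minimal_of_wellFoundedLT (· ∈ T) hne
  exact ⟨m, hm.1, fun x hx => (hT.total hm.1 hx).elim id (hm.2 hx)⟩

theorem ConvexSubtree.nonempty {α : Type*} [PartialOrder α] {X : Set α} (h : ConvexSubtree X) :
    X.Nonempty :=
  let ⟨⟨m, hm, _⟩, _⟩ := h
  ⟨m, hm⟩

section coOrd

variable {α β : Type*} [PartialOrder α] {σ : α → Set β}

theorem coOrd_refl (x : α ⊕ β) : coOrd σ x x := by
  rcases x with a | b
  exacts [le_refl a, rfl]

theorem coOrd_antisymm {x y : α ⊕ β} (hxy : coOrd σ x y) (hyx : coOrd σ y x) : x = y := by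
  rcases x with a | b <;> rcases y with c | d
  exacts [congrArg inl (le_antisymm hxy hyx), hxy.elim, hyx.elim, congrArg inr hxy]

theorem coOrd_trans (hmono : Monotone σ) {x y z : α ⊕ β} (hxy : coOrd σ x y)
    (hyz : coOrd σ y z) : coOrd σ x z := by
  rcases x with a | b <;> rcases y with c | d <;> rcases z with e | f
  exacts [le_trans hxy hyz, hyz.elim, hxy.elim, hxy.elim, hmono hyz hxy, hyz.elim,
    hxy ▸ hyz, hxy ▸ hyz]

theorem coOrd_inr_right_iff {x : α ⊕ β} {b : β} : coOrd σ x (inr b) ↔ x = inr b := by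
  rcases x with a | c
  · exact ⟨False.elim, fun h => inl_ne_inr h |>.elim⟩
  · exact ⟨congrArg inr, fun h => inr_injective h⟩

theorem coOrd_inl_of_forall_le {m : α} (hm : ∀ t, t ≤ m) (hσm : σ m = Set.univ) (x : α ⊕ β) :
    coOrd σ x (inl m) := by
  rcases x with a | b
  exacts [hm a, show b ∈ σ m from hσm ▸ Set.mem_univ b]

theorem coOrd_minimal_iff (hσ : ∀ s, (σ s).Nonempty) (x : α ⊕ β) :
    (∀ y, coOrd σ y x → y = x) ↔ ∃ b : β, x = inr b := by
  rcases x with s | b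
  · refine ⟨fun h => ?_, fun ⟨b, hb⟩ => (inl_ne_inr hb).elim⟩
    obtain ⟨b, hb⟩ := hσ s
    exact (inr_ne_inl (h (inr b) hb)).elim
  · exact ⟨fun _ => ⟨b, rfl⟩, fun _ y hy => coOrd_inr_right_iff.1 hy⟩

variable (hcompα : ∀ a b c : α, c ≤ a → c ≤ b → a ≤ b ∨ b ≤ a)
  (hcomp : ∀ s s' : α, (σ s ∩ σ s').Nonempty → s ≤ s' ∨ s' ≤ s)
include hcompα hcomp

theorem isChain_setOf_coOrd_inl (x : α ⊕ β) : IsChain (· ≤ ·) {t | coOrd σ x (inl t)} := by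
  rintro s hs t ht -
  rcases x with a | b
  exacts [hcompα s t a hs ht, hcomp s t ⟨b, hs, ht⟩]

theorem coOrd_total_of_coOrd {x y z : α ⊕ β} (hzx : coOrd σ z x) (hzy : coOrd σ z y) :
    coOrd σ x y ∨ coOrd σ y x := by
  rcases x with s | b
  · rcases y with t | c
    · exact (isChain_setOf_coOrd_inl hcompα hcomp z).total hzx hzy
    · obtain rfl := coOrd_inr_right_iff.1 hzy
      exact Or.inr hzx
  · obtain rfl := coOrd_inr_right_iff.1 hzx
    exact Or.inl hzy

theorem coOrd_exists_sup [Finite α] {m : α} (hm : ∀ t, t ≤ m) (hσm : σ m = Set.univ)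
    (x y : α ⊕ β) :
    ∃ z, coOrd σ x z ∧ coOrd σ y z ∧ ∀ w, coOrd σ x w → coOrd σ y w → coOrd σ z w := by
  by_cases hxy : coOrd σ x y
  · exact ⟨y, hxy, coOrd_refl y, fun _ _ h => h⟩
  by_cases hyx : coOrd σ y x
  · exact ⟨x, coOrd_refl x, hyx, fun _ h _ => h⟩
  -- Neither is below the other, so no vertex is a common upper bound: the sup is a node.
  have hchain : IsChain (· ≤ ·) ({t | coOrd σ x (inl t)} ∩ {t | coOrd σ y (inl t)}) :=
    (isChain_setOf_coOrd_inl hcompα hcomp x).mono Set.inter_subset_left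
  obtain ⟨n, ⟨hxn, hyn⟩, hn⟩ := hchain.exists_isLeast_of_finite
    ⟨m, coOrd_inl_of_forall_le hm hσm x, coOrd_inl_of_forall_le hm hσm y⟩
  refine ⟨inl n, hxn, hyn, ?_⟩
  rintro (t | b) hxw hyw
  · exact hn ⟨hxw, hyw⟩
  · rw [coOrd_inr_right_iff.1 hxw, coOrd_inr_right_iff.1 hyw] at hxy
    exact (hxy (coOrd_refl _)).elim

end coOrd

theorem stmt_10_general {α β : Type*} [PartialOrder α] [Finite α] [Nonempty α]
    [PartialOrder β]
    (hsupα : ∀ a b : α, ∃ c, a ≤ c ∧ b ≤ c ∧ ∀ d, a ≤ d → b ≤ d → c ≤ d)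
    (hcompα : ∀ a b c : α, c ≤ a → c ≤ b → a ≤ b ∨ b ≤ a)
    (σ : α → Set β)
    (hconv : ∀ s : α, ConvexSubtree (σ s))
    (hmono : ∀ s s' : α, s ≤ s' → σ s ⊆ σ s')
    (htop : ∀ m : α, (∀ x : α, x ≤ m) → σ m = Set.univ)
    (hcomp : ∀ s s' : α, (σ s ∩ σ s').Nonempty → s ≤ s' ∨ s' ≤ s) :
    (∀ x : α ⊕ β, coOrd σ x x) ∧
    (∀ x y : α ⊕ β, coOrd σ x y → coOrd σ y x → x = y) ∧
    (∀ x y z : α ⊕ β, coOrd σ x y → coOrd σ y z → coOrd σ x z) ∧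
    (∀ x y : α ⊕ β, ∃ z, coOrd σ x z ∧ coOrd σ y z ∧
      ∀ w, coOrd σ x w → coOrd σ y w → coOrd σ z w) ∧
    (∀ x y z : α ⊕ β, coOrd σ z x → coOrd σ z y → coOrd σ x y ∨ coOrd σ y x) ∧
    (∀ x : α ⊕ β, (∀ y, coOrd σ y x → y = x) ↔ ∃ s : β, x = Sum.inr s) := by
  have : IsDirectedOrder α := ⟨fun a b => (hsupα a b).imp fun _ h => ⟨h.1, h.2.1⟩⟩
  obtain ⟨m, hm⟩ := Finite.exists_le (id : α → α)
  exact ⟨coOrd_refl, fun _ _ => coOrd_antisymm, fun _ _ _ => coOrd_trans hmono,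
    coOrd_exists_sup hcompα hcomp hm (htop m hm), fun _ _ _ => coOrd_total_of_coOrd hcompα hcomp,
    coOrd_minimal_iff fun s => (hconv s).nonempty⟩

/-- Let `(S₁, σ, S₀)` be a constellation.  Then the constellation order on `S₁ ⊔ S₀` is a
partial order making `S₁ ⊔ S₀` a tree (nonempty finite poset with binary sups and
comparability of elements with a common lower bound), and the elements of `S₀` are exactly
its leaves (= minimal elements, having no predecessors). -/
theorem stmt_10 {α β : Type*} [PartialOrder α] [Finite α] [Nonempty α]
    [PartialOrder β] [Finite β] [Nonempty β]
    (hsupα : ∀ a b : α, ∃ c, a ≤ c ∧ b ≤ c ∧ ∀ d, a ≤ d → b ≤ d → c ≤ d)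
    (hcompα : ∀ a b c : α, c ≤ a → c ≤ b → a ≤ b ∨ b ≤ a)
    (hsupβ : ∀ a b : β, ∃ c, a ≤ c ∧ b ≤ c ∧ ∀ d, a ≤ d → b ≤ d → c ≤ d)
    (hcompβ : ∀ a b c : β, c ≤ a → c ≤ b → a ≤ b ∨ b ≤ a)
    (σ : α → Set β)
    (hconv : ∀ s : α, ConvexSubtree (σ s))
    (hmono : ∀ s s' : α, s ≤ s' → σ s ⊆ σ s')
    (htop : ∀ m : α, (∀ x : α, x ≤ m) → σ m = Set.univ)
    (hcomp : ∀ s s' : α, (σ s ∩ σ s').Nonempty → s ≤ s' ∨ s' ≤ s) :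
    (∀ x : α ⊕ β, coOrd σ x x) ∧
    (∀ x y : α ⊕ β, coOrd σ x y → coOrd σ y x → x = y) ∧
    (∀ x y z : α ⊕ β, coOrd σ x y → coOrd σ y z → coOrd σ x z) ∧
    (∀ x y : α ⊕ β, ∃ z, coOrd σ x z ∧ coOrd σ y z ∧
      ∀ w, coOrd σ x w → coOrd σ y w → coOrd σ z w) ∧
    (∀ x y z : α ⊕ β, coOrd σ z x → coOrd σ z y → coOrd σ x y ∨ coOrd σ y x) ∧
    (∀ x : α ⊕ β, (∀ y, coOrd σ y x → y = x) ↔ ∃ s : β, x = Sum.inr s) :=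
  stmt_10_general hsupα hcompα σ hconv hmono htop hcomp
end

section
/- Let P be a positive opetope, i ∈ ℕ, and p, p' ∈ P_{i+1} − γ(P_{i+2}). Then p <⁻ p' if and only if γ(p) <⁺ γ(p'). -/
/-- A positive hypergraph: graded faces with codomain functions `γ` and (total) domain
relations `δ`. -/
structure PreOpetope where
  P : ℕ → Type
  γ : ∀ k, P (k+1) → P k
  δ : ∀ k, P (k+1) → Set (P k)

namespace PreOpetope

/-- The lower order `<⁻` on `P (k+1)`: transitive closure of `γ a ∈ δ b`. -/
def ltm (O : PreOpetope) (k : ℕ) : O.P (k+1) → O.P (k+1) → Prop :=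
  Relation.TransGen (fun a b => O.γ k a ∈ O.δ k b)

/-- The lower order in every dimension (empty in dimension `0`). -/
def ltmAll (O : PreOpetope) : ∀ k, O.P k → O.P k → Prop
  | 0 => fun _ _ => False
  | (k+1) => O.ltm k

/-- The upper order `<⁺` on `P k`: transitive closure of
`∃ c, a ∈ δ c ∧ γ c = b`. -/
def ltp (O : PreOpetope) (k : ℕ) : O.P k → O.P k → Prop :=
  Relation.TransGen (fun a b => ∃ c : O.P (k+1), a ∈ O.δ k c ∧ O.γ k c = b)

/-- `O` is a positive opetope: a finite positive hypergraph satisfying globularity,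
strictness, disjointness and pencil linearity, with at most one maximal face
(`P_l − δ(P_{l+1})`) in every dimension. -/
structure IsOpetope (O : PreOpetope) : Prop where
  fin : ∀ k, Finite (O.P k)
  bounded : ∃ n, ∀ k, n < k → IsEmpty (O.P k)
  ne : Nonempty (O.P 0)
  pos : ∀ k (a : O.P (k+1)), (O.δ k a).Nonempty
  δzero : ∀ a : O.P 1, ∃! x, x ∈ O.δ 0 a
  glob_γ : ∀ k (a : O.P (k+2)),
    {x : O.P k | x = O.γ k (O.γ (k+1) a)} =
      {x | ∃ b ∈ O.δ (k+1) a, O.γ k b = x} \ {x | ∃ b ∈ O.δ (k+1) a, x ∈ O.δ k b}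
  glob_δ : ∀ k (a : O.P (k+2)),
    O.δ k (O.γ (k+1) a) =
      {x | ∃ b ∈ O.δ (k+1) a, x ∈ O.δ k b} \ {x | ∃ b ∈ O.δ (k+1) a, O.γ k b = x}
  strict : ∀ k (a : O.P k), ¬ O.ltp k a a
  strict0 : ∀ a b : O.P 0, a = b ∨ O.ltp 0 a b ∨ O.ltp 0 b a
  disj : ∀ k (a b : O.P (k+1)),
    ¬ ((O.ltm k a b ∨ O.ltm k b a) ∧ (O.ltp (k+1) a b ∨ O.ltp (k+1) b a))
  pencil_γ : ∀ k (a b : O.P (k+1)), O.γ k a = O.γ k b →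
    a = b ∨ O.ltp (k+1) a b ∨ O.ltp (k+1) b a
  pencil_δ : ∀ k (x : O.P k) (a b : O.P (k+1)), x ∈ O.δ k a → x ∈ O.δ k b →
    a = b ∨ O.ltp (k+1) a b ∨ O.ltp (k+1) b a
  size : ∀ k (a b : O.P k), (¬ ∃ c : O.P (k+1), a ∈ O.δ k c) →
    (¬ ∃ c : O.P (k+1), b ∈ O.δ k c) → a = b

end PreOpetope

/-!
The forward direction only uses that `γ a ∈ δ b` makes `γ a ◁⁺ γ b`, witnessed by `b`.
Conversely, a `◁⁺`-chain from `γ p` to `γ p'` lifts to a `◁⁻`-chain from `p` to some `b` with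
`γ b = γ p'`. By pencil linearity `b` and `p'` are `<⁺`-comparable; since `p'` is not a codomain,
either `b = p'` or `p' <⁺ b = γ α`. In the latter case globularity of `α` yields a face `b'` of
`δ α` with `γ b' = γ b`, still `<⁻`-above `p` and now `<⁺`-below `b`, so finiteness ends the descent.
-/

namespace PreOpetope

variable {O : PreOpetope}

theorem ltp_γ_of_ltm {k : ℕ} {a b : O.P (k+1)} (h : O.ltm k a b) :
    O.ltp k (O.γ k a) (O.γ k b) :=
  Relation.TransGen.lift (O.γ k) (fun _ b hab => ⟨b, hab, rfl⟩) _ _ h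

theorem exists_γ_eq_of_ltp {k : ℕ} {x y : O.P k} (h : O.ltp k x y) :
    ∃ c : O.P (k+1), O.γ k c = y := by
  obtain ⟨_, -, c, -, hc⟩ := Relation.TransGen.tail'_iff.mp h
  exact ⟨c, hc⟩

theorem exists_ltm_of_ltp_γ {k : ℕ} {a : O.P (k+1)} {y : O.P k}
    (h : O.ltp k (O.γ k a) y) : ∃ b, O.γ k b = y ∧ O.ltm k a b := by
  induction h with
  | single h =>
    obtain ⟨b, hab, rfl⟩ := h
    exact ⟨b, rfl, .single hab⟩
  | tail _ h ih =>
    obtain ⟨b, rfl, hab⟩ := ih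
    obtain ⟨c, hbc, rfl⟩ := h
    exact ⟨c, rfl, hab.tail hbc⟩

namespace IsOpetope

theorem wellFounded_ltp (hO : O.IsOpetope) (k : ℕ) : WellFounded (O.ltp k) :=
  have := hO.fin k
  have : IsTrans _ (O.ltp k) := ⟨fun _ _ _ => Relation.TransGen.trans⟩
  have : Std.Irrefl (O.ltp k) := ⟨hO.strict k⟩
  Finite.wellFounded_of_trans_of_irrefl _

theorem wellFounded_flip_ltp (hO : O.IsOpetope) (k : ℕ) : WellFounded (flip (O.ltp k)) :=
  have := hO.fin k
  have : IsTrans _ (flip (O.ltp k)) := ⟨fun _ _ _ h h' => h'.trans h⟩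
  have : Std.Irrefl (flip (O.ltp k)) := ⟨hO.strict k⟩
  Finite.wellFounded_of_trans_of_irrefl _

theorem exists_mem_δ_of_mem_δ_γ (hO : O.IsOpetope) {k : ℕ} {α : O.P (k+2)} {x : O.P k}
    (hx : x ∈ O.δ k (O.γ (k+1) α)) : ∃ b ∈ O.δ (k+1) α, x ∈ O.δ k b := by
  rw [hO.glob_δ] at hx
  exact hx.1

theorem exists_reflTransGen_γ_eq_γ_γ (hO : O.IsOpetope) {i : ℕ} (α : O.P (i+2))
    {b : O.P (i+1)} (hb : b ∈ O.δ (i+1) α) :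
    ∃ b' ∈ O.δ (i+1) α, Relation.ReflTransGen (fun x y => O.γ i x ∈ O.δ i y) b b' ∧
      O.γ i b' = O.γ i (O.γ (i+1) α) := by
  induction b using (InvImage.wf (O.γ i) (hO.wellFounded_flip_ltp i)).induction with
  | _ b ih =>
  by_cases h : ∃ c ∈ O.δ (i+1) α, O.γ i b ∈ O.δ i c
  · obtain ⟨c, hc, hbc⟩ := h
    obtain ⟨b', hb', hcb', hγb'⟩ := ih c (.single ⟨c, hbc, rfl⟩) hc
    exact ⟨b', hb', .head hbc hcb', hγb'⟩
  · have hγb : O.γ i b ∈ {x | x = O.γ i (O.γ (i+1) α)} := by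
      rw [hO.glob_γ]
      exact ⟨⟨b, hb, rfl⟩, h⟩
    exact ⟨b, hb, .refl, hγb⟩

theorem ltm_of_ltm_of_γ_eq (hO : O.IsOpetope) {i : ℕ} {a b p : O.P (i+1)}
    (hp : ¬ ∃ c : O.P (i+2), O.γ (i+1) c = p) (hγ : O.γ i b = O.γ i p)
    (hab : O.ltm i a b) : O.ltm i a p := by
  induction b using (hO.wellFounded_ltp (i+1)).induction with
  | _ b ih =>
  rcases hO.pencil_γ i b p hγ with rfl | hbp | hpb
  · exact hab
  · exact absurd (exists_γ_eq_of_ltp hbp) hp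
  · obtain ⟨α, rfl⟩ := exists_γ_eq_of_ltp hpb
    obtain ⟨a', haa', ha'b⟩ := Relation.TransGen.tail'_iff.mp hab
    obtain ⟨c, hc, ha'c⟩ := hO.exists_mem_δ_of_mem_δ_γ ha'b
    obtain ⟨b', hb', hcb', hγb'⟩ := hO.exists_reflTransGen_γ_eq_γ_γ α hc
    exact ih b' (.single ⟨α, hb', rfl⟩) (hγb'.trans hγ)
      ((Relation.TransGen.tail' haa' ha'c).trans_left hcb')

end IsOpetope

end PreOpetope

open PreOpetope in
theorem stmt_11_general (O : PreOpetope) (hO : O.IsOpetope) (i : ℕ)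
    (p p' : O.P (i+1))
    (hp' : ¬ ∃ c : O.P (i+2), O.γ (i+1) c = p') :
    O.ltm i p p' ↔ O.ltp i (O.γ i p) (O.γ i p') := by
  refine ⟨ltp_γ_of_ltm, fun h => ?_⟩
  obtain ⟨b, hγb, hpb⟩ := exists_ltm_of_ltp_γ h
  exact hO.ltm_of_ltm_of_γ_eq hp' hγb hpb

/-- Let `P` be a positive opetope and `p, p' ∈ P_{i+1} − γ(P_{i+2})`.
Then `p <⁻ p'` iff `γ(p) <⁺ γ(p')`. -/
theorem stmt_11 (O : PreOpetope) (hO : O.IsOpetope) (i : ℕ)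
    (p p' : O.P (i+1))
    (hp : ¬ ∃ c : O.P (i+2), O.γ (i+1) c = p)
    (hp' : ¬ ∃ c : O.P (i+2), O.γ (i+1) c = p') :
    O.ltm i p p' ↔ O.ltp i (O.γ i p) (O.γ i p') :=
  stmt_11_general O hO i p p' hp'
end

section
/- Let P be a positive opetope, i ∈ ℕ, and p ∈ P*_{i+1} = P_{i+1} − γ(P_{i+2}). Then the set π_i(p) = { s ∈ P_i − γ(P_{i+1}) : s <⁺ γ(p) } is a convex subtree of (P_i − γ(P_{i+1}), ≤⁻): it has a largest element, and whenever p₁, p₃ ∈ π_i(p) and p₁ <⁻ p₂ <⁻ p₃ with p₂ ∈ P_i − γ(P_{i+1}), then p₂ ∈ π_i(p). -/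
/-- `π_i(p) = { s ∈ P_i − γ(P_{i+1}) : s <⁺ γ(p) }`. -/
def PreOpetope.piFace (O : PreOpetope) (i : ℕ) (p : O.P (i+1)) : Set (O.P i) :=
  {s | (¬ ∃ c : O.P (i+1), O.γ i c = s) ∧ O.ltp i s (O.γ i p)}

/-! Write `q = γ p`. Globularity, applied along a `<⁺`-chain from `x` up to `q`, shows that
either `γ x = γ q` or `γ x` lies in the domain of another face `<⁺ q`, and such a face can be
pushed down to one in `P*`. Hence every `<⁻`-maximal element of `π(q)` has codomain `γ q`, and
by pencil linearity there is only one such element: it is the largest.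

For convexity, a `<⁻`-chain ending in a face of `P*` can be rerouted through faces of `P*`
alone, replacing a face `γ c ∉ P*` by a `<⁻`-chain inside `δ c`. Walking along the rerouted
chain from `p₁`, pencil linearity keeps every face either `<⁺ q` or `>⁻ q`; the latter is
impossible at `p₂`, since `q <⁻ p₂ <⁻ p₃ <⁺ q` contradicts disjointness. -/

theorem exists_maximal_of_wellFounded_flip {α : Type*} {r : α → α → Prop} [IsTrans α r]
    (hwf : WellFounded (flip r)) {S : Set α} {x : α} (hx : x ∈ S) :
    ∃ m ∈ S, (x = m ∨ r x m) ∧ ∀ y ∈ S, ¬ r m y := by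
  obtain ⟨m, ⟨hmS, hxm⟩, hmax⟩ := hwf.has_min {y | y ∈ S ∧ (x = y ∨ r x y)} ⟨x, hx, Or.inl rfl⟩
  refine ⟨m, hmS, hxm, fun y hyS hmy => hmax y ⟨hyS, Or.inr ?_⟩ hmy⟩
  rcases hxm with rfl | hxm
  · exact hmy
  · exact _root_.trans hxm hmy

namespace PreOpetope

variable {O : PreOpetope} {k : ℕ}

/-- Membership in `P*_k = P_k − γ(P_{k+1})`. -/
def IsInitial (O : PreOpetope) (k : ℕ) (s : O.P k) : Prop := ¬ ∃ c : O.P (k+1), O.γ k c = s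

def LowerInitialStep (O : PreOpetope) (k : ℕ) (a b : O.P (k+1)) : Prop :=
  O.γ k a ∈ O.δ k b ∧ O.IsInitial (k+1) b

lemma ltp_of_mem_delta {a : O.P k} {c : O.P (k+1)} (h : a ∈ O.δ k c) : O.ltp k a (O.γ k c) :=
  .single ⟨c, h, rfl⟩

lemma not_ltp_of_isInitial {a b : O.P k} (hb : O.IsInitial k b) : ¬ O.ltp k a b := by
  intro h
  obtain ⟨_, -, c, -, hc⟩ := Relation.TransGen.tail'_iff.mp h
  exact hb ⟨c, hc⟩

lemma ltp_gamma_of_ltm {a b : O.P (k+1)} (h : O.ltm k a b) : O.ltp k (O.γ k a) (O.γ k b) :=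
  Relation.TransGen.lift (O.γ k) (fun _ _ hab => ⟨_, hab, rfl⟩) _ _ h

instance : IsTrans (O.P k) (O.ltp k) := ⟨fun _ _ _ => .trans⟩

instance : IsTrans (O.P (k+1)) (O.ltm k) := ⟨fun _ _ _ => .trans⟩

lemma wellFounded_ltp (hO : O.IsOpetope) (k : ℕ) : WellFounded (O.ltp k) :=
  have := hO.fin k
  have : Std.Irrefl (O.ltp k) := ⟨hO.strict k⟩
  Finite.wellFounded_of_trans_of_irrefl _

lemma wellFounded_flip_ltm (hO : O.IsOpetope) (k : ℕ) : WellFounded (flip (O.ltm k)) :=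
  have := hO.fin (k+1)
  have : IsTrans (O.P (k+1)) (flip (O.ltm k)) := ⟨fun _ _ _ h h' => h'.trans h⟩
  have : Std.Irrefl (flip (O.ltm k)) :=
    ⟨fun _ h => hO.strict k _ (ltp_gamma_of_ltm h)⟩
  Finite.wellFounded_of_trans_of_irrefl _

lemma eq_of_isInitial_zero (hO : O.IsOpetope) {a b : O.P 0} (ha : O.IsInitial 0 a)
    (hb : O.IsInitial 0 b) : a = b :=
  (hO.strict0 a b).resolve_right
    (fun h => h.elim (not_ltp_of_isInitial hb) (not_ltp_of_isInitial ha))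

lemma eq_of_isInitial_of_gamma_eq (hO : O.IsOpetope) {a b : O.P (k+1)}
    (ha : O.IsInitial (k+1) a) (hb : O.IsInitial (k+1) b) (h : O.γ k a = O.γ k b) : a = b :=
  (hO.pencil_γ k a b h).resolve_right
    (fun h => h.elim (not_ltp_of_isInitial hb) (not_ltp_of_isInitial ha))

lemma exists_isInitial_ltp (hO : O.IsOpetope) {x t : O.P k} (hxt : O.ltp k x t) :
    ∃ s, O.IsInitial k s ∧ O.ltp k s t := by
  induction x using (wellFounded_ltp hO k).induction with
  | _ x ih =>
  by_cases hx : O.IsInitial k x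
  · exact ⟨x, hx, hxt⟩
  · obtain ⟨c, rfl⟩ := not_not.mp hx
    obtain ⟨y, hy⟩ := hO.pos k c
    exact ih y (ltp_of_mem_delta hy) ((ltp_of_mem_delta hy).trans hxt)

lemma gamma_eq_or_exists_mem_delta (hO : O.IsOpetope) (c : O.P (k+2)) {x : O.P (k+1)}
    (hx : x ∈ O.δ (k+1) c) :
    O.γ k x = O.γ k (O.γ (k+1) c) ∨ ∃ y ∈ O.δ (k+1) c, O.γ k x ∈ O.δ k y := by
  refine or_iff_not_imp_right.mpr fun h => ?_
  have hmem : O.γ k x ∈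
      {z | ∃ b ∈ O.δ (k+1) c, O.γ k b = z} \ {z | ∃ b ∈ O.δ (k+1) c, z ∈ O.δ k b} :=
    ⟨⟨x, hx, rfl⟩, h⟩
  rwa [← hO.glob_γ k c] at hmem

lemma exists_mem_delta_of_mem_delta_gamma (hO : O.IsOpetope) (c : O.P (k+2)) {z : O.P k}
    (hz : z ∈ O.δ k (O.γ (k+1) c)) : ∃ e ∈ O.δ (k+1) c, z ∈ O.δ k e := by
  rw [hO.glob_δ k c] at hz
  exact hz.1

lemma exists_isInitial_mem_delta (hO : O.IsOpetope) {q y : O.P (k+1)} {z : O.P k}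
    (hyq : O.ltp (k+1) y q) (hzy : z ∈ O.δ k y) :
    ∃ t, O.IsInitial (k+1) t ∧ z ∈ O.δ k t ∧ O.ltp (k+1) t q := by
  induction y using (wellFounded_ltp hO (k+1)).induction with
  | _ y ih =>
  by_cases hy : O.IsInitial (k+1) y
  · exact ⟨y, hy, hzy, hyq⟩
  · obtain ⟨c, rfl⟩ := not_not.mp hy
    obtain ⟨e, hec, hze⟩ := exists_mem_delta_of_mem_delta_gamma hO c hzy
    exact ih e (ltp_of_mem_delta hec) ((ltp_of_mem_delta hec).trans hyq) hze

lemma gamma_eq_or_exists_ltp (hO : O.IsOpetope) {q x : O.P (k+1)} (hxq : O.ltp (k+1) x q) :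
    O.γ k x = O.γ k q ∨ ∃ y, O.γ k x ∈ O.δ k y ∧ O.ltp (k+1) y q := by
  induction hxq using Relation.TransGen.head_induction_on with
  | single h =>
    obtain ⟨c, hxc, rfl⟩ := h
    rcases gamma_eq_or_exists_mem_delta hO c hxc with hγ | ⟨y, hyc, hxy⟩
    · exact Or.inl hγ
    · exact Or.inr ⟨y, hxy, ltp_of_mem_delta hyc⟩
  | head h hbq ih =>
    obtain ⟨c, hxc, rfl⟩ := h
    rcases gamma_eq_or_exists_mem_delta hO c hxc with hγ | ⟨y, hyc, hxy⟩
    · rwa [hγ]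
    · exact Or.inr ⟨y, hxy, (ltp_of_mem_delta hyc).trans hbq⟩

lemma gamma_eq_of_forall_not_ltm (hO : O.IsOpetope) {q m : O.P (k+1)}
    (hmq : O.ltp (k+1) m q)
    (hmax : ∀ t, O.IsInitial (k+1) t → O.ltp (k+1) t q → ¬ O.ltm k m t) :
    O.γ k m = O.γ k q := by
  rcases gamma_eq_or_exists_ltp hO hmq with hγ | ⟨y, hmy, hyq⟩
  · exact hγ
  · obtain ⟨t, ht, hmt, htq⟩ := exists_isInitial_mem_delta hO hyq hmy
    exact absurd (.single hmt) (hmax t ht htq)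

theorem exists_greatest_isInitial_ltp (hO : O.IsOpetope) {q x : O.P (k+1)}
    (hxq : O.ltp (k+1) x q) :
    ∃ m, (O.IsInitial (k+1) m ∧ O.ltp (k+1) m q) ∧
      ∀ s, O.IsInitial (k+1) s ∧ O.ltp (k+1) s q → s = m ∨ O.ltm k s m := by
  set S := {s | O.IsInitial (k+1) s ∧ O.ltp (k+1) s q}
  have maximal_above : ∀ s ∈ S, ∃ m ∈ S, (s = m ∨ O.ltm k s m) ∧ O.γ k m = O.γ k q := by
    intro s hs
    obtain ⟨m, hm, hsm, hmax⟩ :=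
      exists_maximal_of_wellFounded_flip (wellFounded_flip_ltm hO k) hs
    exact ⟨m, hm, hsm, gamma_eq_of_forall_not_ltm hO hm.2 fun t ht htq => hmax t ⟨ht, htq⟩⟩
  obtain ⟨s₀, hs₀⟩ := exists_isInitial_ltp hO hxq
  obtain ⟨m, hm, -, hmγ⟩ := maximal_above s₀ hs₀
  refine ⟨m, hm, fun s hs => ?_⟩
  obtain ⟨m', hm', hsm', hm'γ⟩ := maximal_above s hs
  rwa [eq_of_isInitial_of_gamma_eq hO hm'.1 hm.1 (hm'γ.trans hmγ.symm)] at hsm'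

lemma exists_lowerInitialStep_chain_of_mem_delta (hO : O.IsOpetope) (c : O.P (k+2))
    {v : O.P (k+1)} (hv : O.γ k (O.γ (k+1) c) ∈ O.δ k v)
    (hreroute : ∀ e ∈ O.δ (k+1) c, ∀ {t w}, O.γ k t ∈ O.δ k e → O.γ k e ∈ O.δ k w →
      ∃ g, Relation.ReflTransGen (O.LowerInitialStep k) t g ∧ O.IsInitial (k+1) g ∧
        O.γ k g ∈ O.δ k w)
    {e : O.P (k+1)} (he : e ∈ O.δ (k+1) c) {t : O.P (k+1)} (hte : O.γ k t ∈ O.δ k e) :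
    ∃ g, Relation.ReflTransGen (O.LowerInitialStep k) t g ∧ O.IsInitial (k+1) g ∧
      O.γ k g ∈ O.δ k v := by
  -- Follow the `<⁻`-path inside `δ c` up to the face whose codomain is `γ (γ c)`.
  induction e using (wellFounded_flip_ltm hO k).induction generalizing t with
  | _ e ih =>
  rcases gamma_eq_or_exists_mem_delta hO c he with hγ | ⟨y, hyc, hey⟩
  · exact hreroute e he hte (hγ ▸ hv)
  · obtain ⟨g₁, hchain₁, -, hg₁⟩ := hreroute e he hte hey
    obtain ⟨g, hchain, hg, hgv⟩ := ih y (.single hey) hyc hg₁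
    exact ⟨g, hchain₁.trans hchain, hg, hgv⟩

lemma exists_lowerInitialStep_chain (hO : O.IsOpetope) {t u w : O.P (k+1)}
    (htu : O.γ k t ∈ O.δ k u) (huw : O.γ k u ∈ O.δ k w) :
    ∃ g, Relation.ReflTransGen (O.LowerInitialStep k) t g ∧ O.IsInitial (k+1) g ∧
      O.γ k g ∈ O.δ k w := by
  induction u using (wellFounded_ltp hO (k+1)).induction generalizing t w with
  | _ u ih =>
  by_cases hu : O.IsInitial (k+1) u
  · exact ⟨u, .single ⟨htu, hu⟩, hu, huw⟩
  · obtain ⟨c, rfl⟩ := not_not.mp hu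
    obtain ⟨e, hec, hte⟩ := exists_mem_delta_of_mem_delta_gamma hO c htu
    exact exists_lowerInitialStep_chain_of_mem_delta hO c huw
      (fun e he => ih e (ltp_of_mem_delta he)) hec hte

lemma reflTransGen_lowerInitialStep_of_ltm (hO : O.IsOpetope) {a b : O.P (k+1)}
    (h : O.ltm k a b) (hb : O.IsInitial (k+1) b) :
    Relation.ReflTransGen (O.LowerInitialStep k) a b := by
  obtain ⟨v, hav, hvb⟩ := Relation.TransGen.head'_iff.mp h
  clear h
  induction hvb using Relation.ReflTransGen.head_induction_on generalizing a with
  | refl => exact .single ⟨hav, hb⟩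
  | head hvw _ ih =>
    obtain ⟨g, hag, -, hgw⟩ := exists_lowerInitialStep_chain hO hav hvw
    exact hag.trans (ih hgw)

lemma ltp_or_ltm_of_lowerInitialStep (hO : O.IsOpetope) {q x y : O.P (k+1)}
    (hxq : O.ltp (k+1) x q) (hxy : O.LowerInitialStep k x y) :
    O.ltp (k+1) y q ∨ O.ltm k q y := by
  rcases gamma_eq_or_exists_ltp hO hxq with hγ | ⟨y', hxy', hy'q⟩
  · exact Or.inr (.single (hγ ▸ hxy.1))
  · rcases hO.pencil_δ k _ y y' hxy.1 hxy' with rfl | hyy' | hy'y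
    · exact Or.inl hy'q
    · exact Or.inl (hyy'.trans hy'q)
    · exact absurd hy'y (not_ltp_of_isInitial hxy.2)

lemma ltp_or_ltm_of_reflTransGen (hO : O.IsOpetope) {q x y : O.P (k+1)}
    (hxy : Relation.ReflTransGen (O.LowerInitialStep k) x y) (hxq : O.ltp (k+1) x q) :
    O.ltp (k+1) y q ∨ O.ltm k q y := by
  induction hxy with
  | refl => exact Or.inl hxq
  | tail _ hst ih =>
    rcases ih with hq | hq
    · exact ltp_or_ltm_of_lowerInitialStep hO hq hst
    · exact Or.inr (hq.tail hst.1)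

theorem ltp_of_ltm_of_ltm (hO : O.IsOpetope) {q p₁ p₂ p₃ : O.P (k+1)}
    (h₁ : O.ltp (k+1) p₁ q) (h₃ : O.ltp (k+1) p₃ q) (h₂ : O.IsInitial (k+1) p₂)
    (h₁₂ : O.ltm k p₁ p₂) (h₂₃ : O.ltm k p₂ p₃) : O.ltp (k+1) p₂ q := by
  rcases ltp_or_ltm_of_reflTransGen hO (reflTransGen_lowerInitialStep_of_ltm hO h₁₂ h₂) h₁
    with h | hq
  · exact h
  · exact absurd ⟨Or.inr (hq.trans h₂₃), Or.inl h₃⟩ (hO.disj k p₃ q)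

end PreOpetope

open PreOpetope in
theorem stmt_12_general (O : PreOpetope) (hO : O.IsOpetope) (i : ℕ)
    (p : O.P (i+1)) :
    (∃ m ∈ O.piFace i p, ∀ x ∈ O.piFace i p, x = m ∨ O.ltmAll i x m) ∧
    (∀ p₁ ∈ O.piFace i p, ∀ p₃ ∈ O.piFace i p, ∀ p₂ : O.P i,
      (¬ ∃ c : O.P (i+1), O.γ i c = p₂) →
      O.ltmAll i p₁ p₂ → O.ltmAll i p₂ p₃ → p₂ ∈ O.piFace i p) := by
  obtain ⟨x, hx⟩ := hO.pos i p
  have hxp : O.ltp i x (O.γ i p) := ltp_of_mem_delta hx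
  cases i with
  | zero =>
    obtain ⟨m, hm⟩ := exists_isInitial_ltp hO hxp
    exact ⟨⟨m, hm, fun s hs => Or.inl (eq_of_isInitial_zero hO hs.1 hm.1)⟩,
      fun _ _ _ _ _ _ h => (h : False).elim⟩
  | succ k =>
    exact ⟨exists_greatest_isInitial_ltp hO hxp, fun p₁ h₁ p₃ h₃ p₂ h₂ h₁₂ h₂₃ =>
      ⟨h₂, ltp_of_ltm_of_ltm hO h₁.2 h₃.2 h₂ h₁₂ h₂₃⟩⟩

/-- Let `P` be a positive opetope and `p ∈ P*_{i+1} = P_{i+1} − γ(P_{i+2})`.  Then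
`π_i(p)` is a convex subtree of `(P*_i, ≤⁻)`: it has a largest element (w.r.t. `≤⁻`),
and it is order-convex in `P*_i` for the lower order. -/
theorem stmt_12 (O : PreOpetope) (hO : O.IsOpetope) (i : ℕ)
    (p : O.P (i+1))
    (hp : ¬ ∃ c : O.P (i+2), O.γ (i+1) c = p) :
    (∃ m ∈ O.piFace i p, ∀ x ∈ O.piFace i p, x = m ∨ O.ltmAll i x m) ∧
    (∀ p₁ ∈ O.piFace i p, ∀ p₃ ∈ O.piFace i p, ∀ p₂ : O.P i,
      (¬ ∃ c : O.P (i+1), O.γ i c = p₂) →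
      O.ltmAll i p₁ p₂ → O.ltmAll i p₂ p₃ → p₂ ∈ O.piFace i p) :=
  stmt_12_general O hO i p
end

section
/- Let P be a positive opetope and i ∈ ℕ. Define ε_{P,i} : P*_{i+1} ⊔ P*_i → P_i (where P*_j = P_j − γ(P_{j+1})) by ε(s•) = s for s ∈ P*_i and ε(s°) = γ(s) for s ∈ P*_{i+1}. Then ε_{P,i} is an order isomorphism from the constellation order ≤^co to (P_i, ≤⁺). -/
namespace PreOpetopeAux

open Relation

variable (O : PreOpetope) (hO : O.IsOpetope)
include hO

lemma wf_ltp (k : ℕ) : WellFounded (O.ltp k) := by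
  have := hO.fin k
  letI : IsTrans (O.P k) (O.ltp k) := ⟨fun _ _ _ => Relation.TransGen.trans⟩
  letI : IsIrrefl (O.P k) (O.ltp k) := ⟨hO.strict k⟩
  exact Finite.wellFounded_of_trans_of_irrefl _

lemma wf_flip_ltp (k : ℕ) : WellFounded (fun u v : O.P k => O.ltp k v u) := by
  have := hO.fin k
  letI : IsTrans (O.P k) (fun u v : O.P k => O.ltp k v u) :=
    ⟨fun _ _ _ h1 h2 => Relation.TransGen.trans h2 h1⟩
  letI : IsIrrefl (O.P k) (fun u v : O.P k => O.ltp k v u) := ⟨hO.strict k⟩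
  exact Finite.wellFounded_of_trans_of_irrefl _

lemma ltm_map {i : ℕ} {a b : O.P (i+1)} (h : O.ltm i a b) :
    O.ltp i (O.γ i a) (O.γ i b) := by
  induction h with
  | single h => exact TransGen.single ⟨_, h, rfl⟩
  | tail _ h ih => exact ih.trans (TransGen.single ⟨_, h, rfl⟩)

lemma exists_last {k : ℕ} {a b : O.P k} (h : O.ltp k a b) :
    ∃ c : O.P (k+1), O.γ k c = b := by
  induction h with
  | single h => obtain ⟨c, _, hc⟩ := h; exact ⟨c, hc⟩
  | tail _ h _ => obtain ⟨c, _, hc⟩ := h; exact ⟨c, hc⟩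

/-- Injectivity of `γ` on faces that are not codomains. -/
lemma inj_A {i : ℕ} {p q : O.P (i+1)} (hp : ¬ ∃ c : O.P (i+2), O.γ (i+1) c = p)
    (hq : ¬ ∃ c : O.P (i+2), O.γ (i+1) c = q) (h : O.γ i p = O.γ i q) : p = q := by
  rcases hO.pencil_γ i p q h with h1 | h1 | h1
  · exact h1
  · exact absurd (exists_last O hO h1) hq
  · exact absurd (exists_last O hO h1) hp

/-- Every codomain face equals the codomain of a face which is itself not a codomain. -/
lemma arep {i : ℕ} (x : O.P i) (hx : ∃ d : O.P (i+1), O.γ i d = x) :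
    ∃ p : O.P (i+1), (¬ ∃ c : O.P (i+2), O.γ (i+1) c = p) ∧ O.γ i p = x := by
  obtain ⟨d, rfl⟩ := hx
  refine (wf_ltp O hO (i+1)).induction
    (C := fun d => ∃ p : O.P (i+1),
      (¬ ∃ c : O.P (i+2), O.γ (i+1) c = p) ∧ O.γ i p = O.γ i d) d ?_
  intro d IH
  by_cases h : ∃ α : O.P (i+2), O.γ (i+1) α = d
  · obtain ⟨α, rfl⟩ := h
    have hmem : O.γ i (O.γ (i+1) α) ∈ {x : O.P i | x = O.γ i (O.γ (i+1) α)} := rfl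
    rw [hO.glob_γ i α] at hmem
    obtain ⟨⟨b, hb, hgb⟩, -⟩ := hmem
    obtain ⟨p, hp1, hp2⟩ := IH b (TransGen.single ⟨α, hb, rfl⟩)
    exact ⟨p, hp1, hp2.trans hgb⟩
  · exact ⟨d, h, rfl⟩

/-- If `a <⁺ b` in dimension `i+1` (single step), the codomains are related. -/
lemma gamma_step {i : ℕ} (α : O.P (i+2)) :
    ∀ a : O.P (i+1), a ∈ O.δ (i+1) α →
      O.γ i a = O.γ i (O.γ (i+1) α) ∨ O.ltp i (O.γ i a) (O.γ i (O.γ (i+1) α)) := by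
  intro a
  refine (by
    have := hO.fin (i+1)
    letI : IsTrans (O.P (i+1)) (fun u v : O.P (i+1) => O.ltm i v u) :=
      ⟨fun _ _ _ h1 h2 => Relation.TransGen.trans h2 h1⟩
    letI : IsIrrefl (O.P (i+1)) (fun u v : O.P (i+1) => O.ltm i v u) :=
      ⟨fun a h => hO.strict i (O.γ i a) (ltm_map O hO h)⟩
    exact Finite.wellFounded_of_trans_of_irrefl _ :
      WellFounded (fun u v : O.P (i+1) => O.ltm i v u)).induction
    (C := fun a => a ∈ O.δ (i+1) α →
      O.γ i a = O.γ i (O.γ (i+1) α) ∨ O.ltp i (O.γ i a) (O.γ i (O.γ (i+1) α))) a ?_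
  intro a IH ha
  by_cases h : ∃ b ∈ O.δ (i+1) α, O.γ i a ∈ O.δ i b
  · obtain ⟨b, hbα, hmem⟩ := h
    have step : O.ltp i (O.γ i a) (O.γ i b) := TransGen.single ⟨b, hmem, rfl⟩
    rcases IH b (TransGen.single hmem) hbα with h1 | h1
    · exact Or.inr (h1 ▸ step)
    · exact Or.inr (step.trans h1)
  · have hmem : O.γ i a ∈
        ({x | ∃ b ∈ O.δ (i+1) α, O.γ i b = x} \ {x | ∃ b ∈ O.δ (i+1) α, x ∈ O.δ i b} :
          Set (O.P i)) := ⟨⟨a, ha, rfl⟩, h⟩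
    rw [← hO.glob_γ i α] at hmem
    exact Or.inl hmem

lemma gamma_le {i : ℕ} {a b : O.P (i+1)} (h : O.ltp (i+1) a b) :
    O.γ i a = O.γ i b ∨ O.ltp i (O.γ i a) (O.γ i b) := by
  induction h with
  | single h =>
    obtain ⟨α, hαa, hαb⟩ := h
    exact hαb ▸ gamma_step O hO α a hαa
  | tail _ h ih =>
    obtain ⟨α, hαa, hαb⟩ := h
    rcases ih with h1 | h1
    · exact h1 ▸ (hαb ▸ gamma_step O hO α _ hαa)
    · rcases hαb ▸ gamma_step O hO α _ hαa with h2 | h2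
      · exact Or.inr (h2 ▸ h1)
      · exact Or.inr (h1.trans h2)

lemma tg_decomp {α : Type*} {r : α → α → Prop} {a b : α} (h : Relation.TransGen r a b) :
    ∃ m, (a = m ∨ Relation.TransGen r a m) ∧ r m b := by
  induction h with
  | single h => exact ⟨_, Or.inl rfl, h⟩
  | tail hab hbc _ => exact ⟨_, Or.inr hab, hbc⟩

/-- The statement proved by the main double well-founded induction. -/
def MainP (O : PreOpetope) (i : ℕ) (t x : O.P i) : Prop :=
  ∀ q : O.P (i+1), (¬ ∃ c : O.P (i+2), O.γ (i+1) c = q) → O.γ i q = t →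
    ((∀ c : O.P (i+1), O.γ i c = t → ∀ y : O.P i, y ∈ O.δ i c →
        (x = y ∨ O.ltp i x y) → (∃ d : O.P (i+1), O.γ i d = y) →
        ∃ b' : O.P (i+1), (¬ ∃ c' : O.P (i+2), O.γ (i+1) c' = b') ∧
          O.γ i b' = y ∧ O.ltm i b' q) ∧
     (∀ p : O.P (i+1), (¬ ∃ c' : O.P (i+2), O.γ (i+1) c' = p) → O.γ i p = x →
        O.ltp i x t → O.ltm i p q))

lemma main (i : ℕ) : ∀ t x : O.P i, MainP O i t x := by
  intro t
  refine (wf_ltp O hO i).induction (C := fun t => ∀ x : O.P i, MainP O i t x) t ?_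
  intro t IHt x
  refine (wf_flip_ltp O hO i).induction (C := fun x => MainP O i t x) x ?_
  intro x IHx q hq hqt
  have part1 : ∀ c : O.P (i+1), O.γ i c = t → ∀ y : O.P i, y ∈ O.δ i c →
      (x = y ∨ O.ltp i x y) → (∃ d : O.P (i+1), O.γ i d = y) →
      ∃ b' : O.P (i+1), (¬ ∃ c' : O.P (i+2), O.γ (i+1) c' = b') ∧
        O.γ i b' = y ∧ O.ltm i b' q := by
    intro c
    refine (wf_ltp O hO (i+1)).induction
      (C := fun c => O.γ i c = t → ∀ y : O.P i, y ∈ O.δ i c →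
        (x = y ∨ O.ltp i x y) → (∃ d : O.P (i+1), O.γ i d = y) →
        ∃ b' : O.P (i+1), (¬ ∃ c' : O.P (i+2), O.γ (i+1) c' = b') ∧
          O.γ i b' = y ∧ O.ltm i b' q) c ?_
    intro c IHc hct y hy hxy hycod
    by_cases hc : ∃ α : O.P (i+2), O.γ (i+1) α = c
    · obtain ⟨α, rfl⟩ := hc
      have hy' := hy
      rw [hO.glob_δ i α] at hy'
      obtain ⟨⟨b, hbα, hyb⟩, -⟩ := hy'
      have hbstep : O.ltp (i+1) b (O.γ (i+1) α) := TransGen.single ⟨α, hbα, rfl⟩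
      rcases gamma_step O hO α b hbα with heq | hlt
      · exact IHc b hbstep (heq.trans hct) y hyb hxy hycod
      · have hlt' : O.ltp i (O.γ i b) t := hct ▸ hlt
        obtain ⟨b₁, hb₁A, hb₁γ⟩ := arep O hO (O.γ i b) ⟨b, rfl⟩
        obtain ⟨b', hb'A, hb'y, hb'ltm⟩ :=
          ((IHt (O.γ i b) hlt' x) b₁ hb₁A hb₁γ).1 b rfl y hyb hxy hycod
        have hxb : O.ltp i x (O.γ i b) := by
          rcases hxy with rfl | hxy'
          · exact TransGen.single ⟨b, hyb, rfl⟩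
          · exact hxy'.tail ⟨b, hyb, rfl⟩
        have hb₁q : O.ltm i b₁ q := ((IHx (O.γ i b) hxb) q hq hqt).2 b₁ hb₁A hb₁γ hlt'
        exact ⟨b', hb'A, hb'y, hb'ltm.trans hb₁q⟩
    · have hcq : c = q := inj_A O hO hc hq (hct.trans hqt.symm)
      subst hcq
      obtain ⟨b', hb'A, hb'y⟩ := arep O hO y hycod
      exact ⟨b', hb'A, hb'y, TransGen.single (show O.γ i b' ∈ O.δ i c from hb'y ▸ hy)⟩
  refine ⟨part1, ?_⟩
  intro p hpA hpx hxt
  obtain ⟨y, hxy, c', hyc', hc't⟩ := tg_decomp O hO hxt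
  have hycod : ∃ d : O.P (i+1), O.γ i d = y := by
    rcases hxy with rfl | h
    · exact ⟨p, hpx⟩
    · exact exists_last O hO h
  obtain ⟨b', hb'A, hb'y, hb'q⟩ := part1 c' hc't y hyc' hxy hycod
  rcases hxy with rfl | hxy'
  · have : b' = p := inj_A O hO hb'A hpA (hb'y.trans hpx.symm)
    exact this ▸ hb'q
  · have hyt : O.ltp i y t := TransGen.single ⟨c', hyc', hc't⟩
    have hpb' : O.ltm i p b' := ((IHt y hyt x) b' hb'A hb'y).2 p hpA hpx hxy'
    exact hpb'.trans hb'q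

end PreOpetopeAux


/-- Let `P` be a positive opetope.  The map `ε_{P,i} : P*_{i+1} ⊔ P*_i → P_i`, sending a
vertex `s•` to `s` and a circle `s°` to `γ(s)`, is an order isomorphism from the
constellation order `≤^co` to `(P_i, ≤⁺)`. -/
theorem stmt_14 (O : PreOpetope) (hO : O.IsOpetope) (i : ℕ) :
    let A := {p : O.P (i+1) // ¬ ∃ c : O.P (i+2), O.γ (i+1) c = p}
    let B := {s : O.P i // ¬ ∃ c : O.P (i+1), O.γ i c = s}
    let ε : A ⊕ B → O.P i := fun x =>
      match x with
      | Sum.inl p => O.γ i p.1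
      | Sum.inr s => s.1
    let co : A ⊕ B → A ⊕ B → Prop := fun x y =>
      match x, y with
      | Sum.inl p, Sum.inl q => p = q ∨ O.ltm i p.1 q.1
      | Sum.inr s, Sum.inl q => O.ltp i s.1 (O.γ i q.1)
      | Sum.inr s, Sum.inr t => s = t
      | Sum.inl _, Sum.inr _ => False
    Function.Bijective ε ∧
      ∀ x y : A ⊕ B, co x y ↔ (ε x = ε y ∨ O.ltp i (ε x) (ε y)) := by
  intro A B ε co
  open PreOpetopeAux in
  refine ⟨⟨?_, ?_⟩, ?_⟩
  · -- injective
    rintro (p | s) (q | t) h <;> simp only [ε] at h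
    · exact congrArg Sum.inl (Subtype.ext (inj_A O hO p.2 q.2 h))
    · exact absurd ⟨p.1, h⟩ t.2
    · exact absurd ⟨q.1, h.symm⟩ s.2
    · exact congrArg Sum.inr (Subtype.ext h)
  · -- surjective
    intro x
    by_cases h : ∃ c : O.P (i+1), O.γ i c = x
    · obtain ⟨p, hpA, hpx⟩ := arep O hO x h
      exact ⟨Sum.inl ⟨p, hpA⟩, hpx⟩
    · exact ⟨Sum.inr ⟨x, h⟩, rfl⟩
  · -- order iso
    rintro (p | s) (q | t) <;> simp only [ε, co]
    · constructor
      · rintro (rfl | h)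
        · exact Or.inl rfl
        · exact Or.inr (ltm_map O hO h)
      · rintro (h | h)
        · exact Or.inl (Subtype.ext (inj_A O hO p.2 q.2 h))
        · exact Or.inr ((main O hO i (O.γ i q.1) (O.γ i p.1) q.1 q.2 rfl).2 p.1 p.2 rfl h)
    · constructor
      · exact fun h => h.elim
      · rintro (h | h)
        · exact absurd ⟨p.1, h⟩ t.2
        · exact absurd (exists_last O hO h) t.2
    · constructor
      · exact fun h => Or.inr h
      · rintro (h | h)
        · exact absurd ⟨q.1, h.symm⟩ s.2
        · exact h
    · constructor
      · rintro rfl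
        exact Or.inl rfl
      · rintro (h | h)
        · exact Subtype.ext h
        · exact absurd (exists_last O hO h) t.2
end

section
/- Let h : Q → P be a contraction morphism (ι-map) of positive opetopes and q₁, q₂ ∈ Q − ker(h). If h(q₁) = h(q₂) then q₁ and q₂ are comparable in the upper order ⊥⁺ (i.e., q₁ = q₂ or q₁ <⁺ q₂ or q₂ <⁺ q₁). -/
namespace PreOpetope

/-- Iterated codomain `γ^(k)`: apply `γ` to a face of dimension `l` until the dimension
is at most `k`. -/
def γdown (O : PreOpetope) : ∀ (l : ℕ), O.P l → ℕ → Σ j, O.P j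
  | 0, p, _ => ⟨0, p⟩
  | (l+1), p, k => if l + 1 ≤ k then ⟨l+1, p⟩ else O.γdown l (O.γ l p) k

end PreOpetope

/-- A contraction morphism (`ι`-map) of positive hypergraphs `h : Q → P`: faces map to
faces of dimension at most their own, iterated codomains are preserved, and domains are
preserved in the graded sense, where `ker h` consists of the dimension-lowering
(collapsing) faces. -/
structure IsContraction (Q P : PreOpetope) (h : ∀ k, Q.P k → Σ j, P.P j) : Prop where
  dim_le : ∀ k (q : Q.P k), (h k q).1 ≤ k
  γ_pres : ∀ (l k : ℕ) (q : Q.P l),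
    h (Q.γdown l q k).1 (Q.γdown l q k).2 = P.γdown (h l q).1 (h l q).2 k
  δ_eq : ∀ k (q : Q.P (k+1)) (p : P.P (k+1)), h (k+1) q = ⟨k+1, p⟩ →
    Set.BijOn (fun x => h k x) {x | x ∈ Q.δ k q ∧ (h k x).1 = k}
      {y : Σ j, P.P j | ∃ y' ∈ P.δ k p, y = ⟨k, y'⟩}
  δ_drop : ∀ k (q : Q.P (k+1)), (h (k+1) q).1 = k →
    Set.BijOn (fun x => h k x) {x | x ∈ Q.δ k q ∧ (h k x).1 = k} {h (k+1) q}
  δ_low : ∀ k (q : Q.P (k+1)), (h (k+1) q).1 < k →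
    ∀ x ∈ Q.δ k q, (h k x).1 < k


namespace StmtAux

open Relation

variable {Q P : PreOpetope} {h : ∀ k, Q.P k → Σ j, P.P j}

/-- single step of the upper order -/
def stepUp (Q : PreOpetope) (k : ℕ) (a b : Q.P k) : Prop :=
  ∃ c : Q.P (k+1), a ∈ Q.δ k c ∧ Q.γ k c = b

lemma ltp_eq (Q : PreOpetope) (k : ℕ) : Q.ltp k = Relation.TransGen (stepUp Q k) := rfl

lemma sig_mk_inj {R : PreOpetope} {j : ℕ} {a b : R.P j}
    (e : (⟨j, a⟩ : Σ i, R.P i) = ⟨j, b⟩) : a = b := by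
  simpa using e

lemma exists_eq_of_dim {j i : ℕ} (q : Q.P j) (hd : (h j q).1 = i) :
    ∃ p : P.P i, h j q = ⟨i, p⟩ := by
  rcases e : h j q with ⟨i', p⟩
  rw [e] at hd
  dsimp at hd
  subst hd
  exact ⟨p, rfl⟩

lemma γdown_self (R : PreOpetope) : ∀ (j : ℕ) (x : R.P j), R.γdown j x j = ⟨j, x⟩ := by
  intro j x
  cases j with
  | zero => rfl
  | succ i => simp [PreOpetope.γdown]

lemma γdown_succ (R : PreOpetope) (j : ℕ) (x : R.P (j+1)) :
    R.γdown (j+1) x j = ⟨j, R.γ j x⟩ := by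
  have : ¬ (j + 1 ≤ j) := by omega
  simp [PreOpetope.γdown, this, γdown_self]

/-- Fact A : images of codomains of non-collapsing faces. -/
lemma factA (hc : IsContraction Q P h) {j : ℕ} (q : Q.P (j+1)) (p' : P.P (j+1))
    (e : h (j+1) q = ⟨j+1, p'⟩) : h j (Q.γ j q) = ⟨j, P.γ j p'⟩ := by
  have hpres := hc.γ_pres (j+1) j q
  rw [γdown_succ] at hpres
  rw [e] at hpres
  dsimp at hpres
  rw [γdown_succ] at hpres
  exact hpres

/-- Fact B : codomains of faces collapsing by exactly one. -/
lemma factB (hc : IsContraction Q P h) {j : ℕ} (q : Q.P (j+1))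
    (e : (h (j+1) q).1 = j) : h j (Q.γ j q) = h (j+1) q := by
  obtain ⟨r, hr⟩ := exists_eq_of_dim (h := h) q e
  have hpres := hc.γ_pres (j+1) j q
  rw [γdown_succ] at hpres
  rw [hr] at hpres
  dsimp at hpres
  rw [γdown_self] at hpres
  rw [hr]
  exact hpres

/-- Either equal images, or strictly `<⁺`-related images in `P` (in dimension `j`). -/
def EqOrLtp (P : PreOpetope) (j : ℕ) (u v : Σ i, P.P i) : Prop :=
  u = v ∨ ∃ a b : P.P j, u = ⟨j, a⟩ ∧ v = ⟨j, b⟩ ∧ P.ltp j a b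

lemma eqOrLtp_trans {j : ℕ} {u v w : Σ i, P.P i}
    (h1 : EqOrLtp P j u v) (h2 : EqOrLtp P j v w) : EqOrLtp P j u w := by
  rcases h1 with rfl | ⟨a, b, ea, eb, hab⟩
  · exact h2
  · rcases h2 with rfl | ⟨a', b', ea', eb', hab'⟩
    · exact Or.inr ⟨a, b, ea, eb, hab⟩
    · have : b = a' := sig_mk_inj (eb.symm.trans ea')
      subst this
      exact Or.inr ⟨a, b', ea, eb', hab.trans hab'⟩

/-- Single-step trace of images along a `<⁺`-step for a non-collapsing face. -/
lemma step' (hc : IsContraction Q P h) {j : ℕ} (a : Q.P j) (c : Q.P (j+1)) (ha : a ∈ Q.δ j c)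
    (hd : (h j a).1 = j) :
    (h j (Q.γ j c)).1 = j ∧
      ((∃ a' b' : P.P j, h j a = ⟨j, a'⟩ ∧ h j (Q.γ j c) = ⟨j, b'⟩ ∧ P.ltp j a' b') ∨
       (h j a = h j (Q.γ j c) ∧ (h (j+1) c).1 = j)) := by
  rcases Nat.lt_trichotomy ((h (j+1) c).1) j with hdc | hdc | hdc
  · exact absurd (hc.δ_low j c hdc a ha) (by omega)
  · have hmem := (hc.δ_drop j c hdc).mapsTo ⟨ha, hd⟩
    have hae : h j a = h (j+1) c := Set.mem_singleton_iff.mp hmem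
    have hb := factB hc c hdc
    refine ⟨by rw [hb]; exact hdc, Or.inr ⟨hae.trans hb.symm, hdc⟩⟩
  · have hdceq : (h (j+1) c).1 = j + 1 := le_antisymm (hc.dim_le _ c) (by omega)
    obtain ⟨c', ec⟩ := exists_eq_of_dim (h := h) c hdceq
    have hmem := (hc.δ_eq j c c' ec).mapsTo ⟨ha, hd⟩
    obtain ⟨a', ha', haa'⟩ := hmem
    have hγ := factA hc c c' ec
    refine ⟨by rw [hγ], Or.inl ⟨a', P.γ j c', haa', hγ,
      Relation.TransGen.single ⟨c', ha', rfl⟩⟩⟩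

/-- Trace of images along `<⁺` chains starting from a non-collapsing face. -/
lemma traceLtp (hc : IsContraction Q P h) {j : ℕ} {a b : Q.P j} (hab : Q.ltp j a b)
    (hd : (h j a).1 = j) :
    (h j b).1 = j ∧ EqOrLtp P j (h j a) (h j b) := by
  have hab' : Relation.TransGen (stepUp Q j) a b := hab
  clear hab
  induction hab' with
  | single hs =>
    obtain ⟨c, hac, hγ⟩ := hs
    subst hγ
    obtain ⟨hdim, hdisj⟩ := step' (hc := hc) a c hac hd
    refine ⟨hdim, ?_⟩
    rcases hdisj with ⟨a', b', ea, eb, hlt⟩ | ⟨heq, _⟩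
    · exact Or.inr ⟨a', b', ea, eb, hlt⟩
    · exact Or.inl heq
  | tail hab2 hs ih =>
    obtain ⟨c, hbc, hγ⟩ := hs
    subst hγ
    obtain ⟨hdb, he⟩ := ih
    obtain ⟨hdim, hdisj⟩ := step' (hc := hc) _ c hbc hdb
    refine ⟨hdim, eqOrLtp_trans he ?_⟩
    rcases hdisj with ⟨a', b', ea, eb, hlt⟩ | ⟨heq, _⟩
    · exact Or.inr ⟨a', b', ea, eb, hlt⟩
    · exact Or.inl heq

lemma dimPres (hc : IsContraction Q P h) {j : ℕ} {a b : Q.P j} (hab : Q.ltp j a b)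
    (hd : (h j a).1 = j) : (h j b).1 = j :=
  (traceLtp (hc := hc) hab hd).1

lemma ltmGamma {j : ℕ} {x y : Q.P (j+1)} (hxy : Q.ltm j x y) :
    Q.ltp j (Q.γ j x) (Q.γ j y) := by
  have hxy' : Relation.TransGen (fun a b => Q.γ j a ∈ Q.δ j b) x y := hxy
  clear hxy
  induction hxy' with
  | single hs => exact Relation.TransGen.single ⟨_, hs, rfl⟩
  | tail hxb hs ih => exact ih.trans (Relation.TransGen.single ⟨_, hs, rfl⟩)

/-- Two non-collapsing faces with the same image are never `<⁻`-comparable. -/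
lemma noLtm (hP : P.IsOpetope) (hc : IsContraction Q P h) {j : ℕ} {p : P.P (j+1)} {q₁ q₂ : Q.P (j+1)}
    (e₁ : h (j+1) q₁ = ⟨j+1, p⟩) (e₂ : h (j+1) q₂ = ⟨j+1, p⟩)
    (hltm : Q.ltm j q₁ q₂) : False := by
  have fA₁ := factA hc q₁ p e₁
  have fA₂ := factA hc q₂ p e₂
  obtain ⟨y, hry, hstep⟩ :=
    Relation.TransGen.tail'_iff.mp (hltm : Relation.TransGen _ q₁ q₂)
  have hEoL : EqOrLtp P j (⟨j, P.γ j p⟩ : Σ i, P.P i) (h j (Q.γ j y)) := by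
    rcases Relation.reflTransGen_iff_eq_or_transGen.mp hry with hEq | hTG
    · rw [hEq, fA₁]
      exact Or.inl rfl
    · have ht := traceLtp (hc := hc) (ltmGamma hTG) (by rw [fA₁])
      rw [fA₁] at ht
      exact ht.2
  have hdy : (h j (Q.γ j y)).1 = j := by
    rcases hEoL with e | ⟨u, v, _, ev, _⟩
    · rw [← e]
    · rw [ev]
  obtain ⟨_, hdisj⟩ := step' (hc := hc) (Q.γ j y) q₂ hstep hdy
  rcases hdisj with ⟨a', b', ea, eb, hlt⟩ | ⟨_, hflat⟩
  · have hb' : b' = P.γ j p := sig_mk_inj (eb.symm.trans fA₂)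
    subst hb'
    rcases hEoL with e | ⟨u, v, eu, ev, hltp⟩
    · have ha' : P.γ j p = a' := sig_mk_inj (e.trans ea)
      exact hP.strict j (P.γ j p) (ha' ▸ hlt)
    · have hu : P.γ j p = u := sig_mk_inj eu
      have hv : v = a' := sig_mk_inj (ev.symm.trans ea)
      subst hu; subst hv
      exact hP.strict j (P.γ j p) (hltp.trans hlt)
  · rw [e₂] at hflat
    dsimp at hflat
    omega

lemma wf_ltp_rev (hQ : Q.IsOpetope) (j : ℕ) :
    WellFounded (fun a b : Q.P j => Q.ltp j b a) := by
  haveI := hQ.fin j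
  haveI : IsTrans (Q.P j) (fun a b : Q.P j => Q.ltp j b a) :=
    ⟨fun _ _ _ h1 h2 => Relation.TransGen.trans h2 h1⟩
  haveI : IsIrrefl (Q.P j) (fun a b : Q.P j => Q.ltp j b a) :=
    ⟨fun a ha => hQ.strict j a ha⟩
  exact Finite.wellFounded_of_trans_of_irrefl _

lemma gSingle (hQ : Q.IsOpetope) {j : ℕ} (g : Q.P (j+2)) :
    ∀ t : Q.P j, (∃ e ∈ Q.δ (j+1) g, Q.γ j e = t) →
      t = Q.γ j (Q.γ (j+1) g) ∨ Q.ltp j t (Q.γ j (Q.γ (j+1) g)) := by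
  intro t
  refine WellFounded.induction (wf_ltp_rev hQ j)
    (C := fun t => (∃ e ∈ Q.δ (j+1) g, Q.γ j e = t) →
      t = Q.γ j (Q.γ (j+1) g) ∨ Q.ltp j t (Q.γ j (Q.γ (j+1) g))) t ?_
  intro t IH hex
  obtain ⟨e, heg, hγe⟩ := hex
  by_cases hin : ∃ e' ∈ Q.δ (j+1) g, t ∈ Q.δ j e'
  · obtain ⟨e', he'g, hte'⟩ := hin
    have hstep : Q.ltp j t (Q.γ j e') := Relation.TransGen.single ⟨e', hte', rfl⟩
    rcases IH (Q.γ j e') hstep ⟨e', he'g, rfl⟩ with heq | hlt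
    · exact Or.inr (heq ▸ hstep)
    · exact Or.inr (hstep.trans hlt)
  · left
    have hmem : t ∈ {x : Q.P j | x = Q.γ j (Q.γ (j+1) g)} := by
      rw [hQ.glob_γ j g]
      exact ⟨⟨e, heg, hγe⟩, hin⟩
    exact hmem

lemma gammaMono (hQ : Q.IsOpetope) {j : ℕ} {c₁ c₂ : Q.P (j+1)}
    (hlt : Q.ltp (j+1) c₁ c₂) :
    Q.γ j c₁ = Q.γ j c₂ ∨ Q.ltp j (Q.γ j c₁) (Q.γ j c₂) := by
  have hlt' : Relation.TransGen (stepUp Q (j+1)) c₁ c₂ := hlt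
  clear hlt
  induction hlt' with
  | single hs =>
    obtain ⟨g, hcg, hγg⟩ := hs
    have hgs := gSingle hQ g (Q.γ j c₁) ⟨c₁, hcg, rfl⟩
    rw [hγg] at hgs
    exact hgs
  | tail hcb hs ih =>
    obtain ⟨g, hbg, hγg⟩ := hs
    have hb := gSingle hQ g (Q.γ j _) ⟨_, hbg, rfl⟩
    rw [hγg] at hb
    rcases ih with e1 | l1 <;> rcases hb with e2 | l2
    · exact Or.inl (e1.trans e2)
    · exact Or.inr (by rw [e1]; exact l2)
    · exact Or.inr (by rw [← e2]; exact l1)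
    · exact Or.inr (l1.trans l2)

/-- Two faces with a common `<⁺`-lower bound are `<⁺`-comparable. -/
lemma commonLower (hQ : Q.IsOpetope) {j : ℕ} :
    ∀ w x b : Q.P j, Relation.ReflTransGen (stepUp Q j) w x →
      Relation.ReflTransGen (stepUp Q j) w b →
      x = b ∨ Q.ltp j x b ∨ Q.ltp j b x := by
  intro w
  refine WellFounded.induction (wf_ltp_rev hQ j)
    (C := fun w => ∀ x b : Q.P j, Relation.ReflTransGen (stepUp Q j) w x →
      Relation.ReflTransGen (stepUp Q j) w b →
      x = b ∨ Q.ltp j x b ∨ Q.ltp j b x) w ?_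
  intro w IH x b h1 h2
  rcases h1.cases_head with rfl | ⟨w₁, ⟨c₁, hwc₁, hγc₁⟩, h1'⟩
  · rcases Relation.reflTransGen_iff_eq_or_transGen.mp h2 with e | l
    · exact Or.inl e.symm
    · exact Or.inr (Or.inl l)
  · rcases h2.cases_head with rfl | ⟨w₂, ⟨c₂, hwc₂, hγc₂⟩, h2'⟩
    · exact Or.inr (Or.inr (Relation.TransGen.head' ⟨c₁, hwc₁, hγc₁⟩ h1'))
    · have hstep₁ : Q.ltp j w w₁ := Relation.TransGen.single ⟨c₁, hwc₁, hγc₁⟩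
      have hstep₂ : Q.ltp j w w₂ := Relation.TransGen.single ⟨c₂, hwc₂, hγc₂⟩
      rcases hQ.pencil_δ j w c₁ c₂ hwc₁ hwc₂ with e | hcc | hcc
      · subst e
        have e2 : w₁ = w₂ := hγc₁.symm.trans hγc₂
        have h2'' : Relation.ReflTransGen (stepUp Q j) w₁ b := by rw [e2]; exact h2'
        exact IH w₁ hstep₁ x b h1' h2''
      · rcases gammaMono hQ hcc with e | l
        · have e2 : w₁ = w₂ := by rw [← hγc₁, ← hγc₂, e]
          have h2'' : Relation.ReflTransGen (stepUp Q j) w₁ b := by rw [e2]; exact h2'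
          exact IH w₁ hstep₁ x b h1' h2''
        · have l2 : Q.ltp j w₁ w₂ := by rw [← hγc₁, ← hγc₂]; exact l
          exact IH w₁ hstep₁ x b h1' (l2.to_reflTransGen.trans h2')
      · rcases gammaMono hQ hcc with e | l
        · have e2 : w₂ = w₁ := by rw [← hγc₁, ← hγc₂, e]
          have h1'' : Relation.ReflTransGen (stepUp Q j) w₂ x := by rw [e2]; exact h1'
          exact IH w₂ hstep₂ x b h1'' h2'
        · have l2 : Q.ltp j w₂ w₁ := by rw [← hγc₁, ← hγc₂]; exact l
          exact IH w₂ hstep₂ x b (l2.to_reflTransGen.trans h1') h2'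

/-- Propagation lemma: if `γ x ∈ δ e` and `e ≤⁺ b`, then `x` and `b` are comparable
or `γ x ∈ δ b`. -/
lemma uProp (hQ : Q.IsOpetope) {j : ℕ} (x : Q.P (j+1)) {e b : Q.P (j+1)}
    (hx : Q.γ j x ∈ Q.δ j e)
    (hch : Relation.ReflTransGen (stepUp Q (j+1)) e b) :
    x = b ∨ Q.ltp (j+1) x b ∨ Q.ltp (j+1) b x ∨ Q.γ j x ∈ Q.δ j b := by
  revert hx
  induction hch using Relation.ReflTransGen.head_induction_on with
  | refl => intro hx; exact Or.inr (Or.inr (Or.inr hx))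
  | head hs hrest ih =>
    intro hx
    obtain ⟨f, hef, hγf⟩ := hs
    by_cases hg : ∃ g ∈ Q.δ (j+1) f, Q.γ j g = Q.γ j x
    · obtain ⟨g, hgf, hγg⟩ := hg
      rcases hQ.pencil_γ j x g hγg.symm with exg | hxg | hgx
      · subst exg
        exact Or.inr (Or.inl (Relation.TransGen.head' ⟨f, hgf, hγf⟩ hrest))
      · have hgb : Q.ltp (j+1) g b := Relation.TransGen.head' ⟨f, hgf, hγf⟩ hrest
        exact Or.inr (Or.inl (hxg.trans hgb))
      · have hgb : Q.ltp (j+1) g b := Relation.TransGen.head' ⟨f, hgf, hγf⟩ hrest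
        rcases commonLower hQ g x b hgx.to_reflTransGen hgb.to_reflTransGen with e2 | l | l
        · exact Or.inl e2
        · exact Or.inr (Or.inl l)
        · exact Or.inr (Or.inr (Or.inl l))
    · have hmem : Q.γ j x ∈ Q.δ j (Q.γ (j+1) f) := by
        rw [hQ.glob_δ j f]
        exact ⟨⟨_, hef, hx⟩, hg⟩
      rw [hγf] at hmem
      exact ih hmem

/-- A `<⁺`-step mediated by a collapsing (flat) face. -/
def flatStep (h : ∀ k, Q.P k → Σ j, P.P j) (j : ℕ) (x y : Q.P j) : Prop :=
  ∃ c : Q.P (j+1), x ∈ Q.δ j c ∧ Q.γ j c = y ∧ (h (j+1) c).1 = j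

lemma flatChain' (hc : IsContraction Q P h) {j : ℕ} {a b : Q.P j}
    (hab : Q.ltp j a b) (hd : (h j a).1 = j) :
    (∃ a' b' : P.P j, h j a = ⟨j, a'⟩ ∧ h j b = ⟨j, b'⟩ ∧ P.ltp j a' b') ∨
      (h j a = h j b ∧ Relation.TransGen (flatStep h j) a b) := by
  have hab' : Relation.TransGen (stepUp Q j) a b := hab
  clear hab
  induction hab' with
  | single hs =>
    obtain ⟨c, hac, hγ⟩ := hs
    subst hγ
    obtain ⟨hdim, hdisj⟩ := step' hc a c hac hd
    rcases hdisj with hstrict | ⟨heq', hflat⟩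
    · exact Or.inl hstrict
    · exact Or.inr ⟨heq', Relation.TransGen.single ⟨c, hac, rfl, hflat⟩⟩
  | tail hab2 hs ih =>
    rename_i bmid _
    obtain ⟨c, hbc, hγ⟩ := hs
    subst hγ
    rcases ih with ⟨a', b', ea, eb, hltp⟩ | ⟨heqab, hchain⟩
    · have hdb : (h j bmid).1 = j := by rw [eb]
      obtain ⟨hdim, hdisj⟩ := step' hc bmid c hbc hdb
      rcases hdisj with ⟨a2, b2, ea2, eb2, hltp2⟩ | ⟨heq2, hflat⟩
      · have e3 : b' = a2 := sig_mk_inj (eb.symm.trans ea2)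
        subst e3
        exact Or.inl ⟨a', b2, ea, eb2, hltp.trans hltp2⟩
      · exact Or.inl ⟨a', b', ea, heq2.symm.trans eb, hltp⟩
    · have hdb : (h j bmid).1 = j := by rw [← heqab]; exact hd
      obtain ⟨hdim, hdisj⟩ := step' hc bmid c hbc hdb
      rcases hdisj with ⟨a2, b2, ea2, eb2, hltp2⟩ | ⟨heq2, hflat⟩
      · exact Or.inl ⟨a2, b2, heqab.trans ea2, eb2, hltp2⟩
      · exact Or.inr ⟨heqab.trans heq2, hchain.tail ⟨c, hbc, rfl, hflat⟩⟩

lemma flatChain (hP : P.IsOpetope) (hc : IsContraction Q P h) {j : ℕ} {a b : Q.P j}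
    (hab : Q.ltp j a b) (hd : (h j a).1 = j) (heq : h j a = h j b) :
    Relation.TransGen (flatStep h j) a b := by
  rcases flatChain' hc hab hd with ⟨a', b', ea, eb, hltp⟩ | ⟨_, hchain⟩
  · have e3 : a' = b' := sig_mk_inj (ea.symm.trans (heq.trans eb))
    subst e3
    exact absurd hltp (hP.strict j a')
  · exact hchain

lemma chainLtm {j : ℕ} (q₁ : Q.P (j+1)) :
    ∀ {a' : Q.P j}, Relation.ReflTransGen (flatStep h j) (Q.γ j q₁) a' →
      ∀ c : Q.P (j+1), a' ∈ Q.δ j c → Q.ltm j q₁ c := by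
  intro a' hch
  induction hch with
  | refl => intro c hc1; exact Relation.TransGen.single hc1
  | tail hpre hs ih =>
    intro c hc1
    obtain ⟨c₂, hbc₂, hγc₂, _⟩ := hs
    exact (ih c₂ hbc₂).tail (by rw [hγc₂]; exact hc1)

lemma vLemma (hQ : Q.IsOpetope) (hP : P.IsOpetope) (hc : IsContraction Q P h)
    {j : ℕ} {p : P.P (j+1)} {q₁ q₂ : Q.P (j+1)}
    (e₁ : h (j+1) q₁ = ⟨j+1, p⟩) (e₂ : h (j+1) q₂ = ⟨j+1, p⟩) :
    ∀ {a' : Q.P j}, Relation.ReflTransGen (flatStep h j) (Q.γ j q₁) a' →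
      ∀ c : Q.P (j+1), a' ∈ Q.δ j c → (h (j+1) c).1 = j → Q.ltp (j+1) c q₂ →
      q₁ = q₂ ∨ Q.ltp (j+1) q₁ q₂ ∨ Q.ltp (j+1) q₂ q₁ := by
  intro a' hch
  induction hch with
  | refl =>
    intro c hc1 hflat hcq
    rcases uProp hQ q₁ hc1 hcq.to_reflTransGen with e | l | l | hin
    · exact Or.inl e
    · exact Or.inr (Or.inl l)
    · exact Or.inr (Or.inr l)
    · exact absurd (Relation.TransGen.single hin : Q.ltm j q₁ q₂)
        (fun hl => noLtm hP hc e₁ e₂ hl)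
  | tail hpre hs ih =>
    intro c hc1 hflat hcq
    obtain ⟨c₂, hbc₂, hγc₂, hflat₂⟩ := hs
    have hγin : Q.γ j c₂ ∈ Q.δ j c := by rw [hγc₂]; exact hc1
    rcases uProp hQ c₂ hγin hcq.to_reflTransGen with e | l | l | hin
    · exfalso
      rw [e, e₂] at hflat₂
      dsimp at hflat₂
      omega
    · exact ih c₂ hbc₂ hflat₂ l
    · exfalso
      have hdd := dimPres hc l (by rw [e₂])
      omega
    · exfalso
      have hltm : Q.ltm j q₁ q₂ := by
        have hch' : Relation.ReflTransGen (flatStep h j) (Q.γ j q₁) _ :=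
          hpre.tail ⟨c₂, hbc₂, hγc₂, hflat₂⟩
        exact chainLtm q₁ hch' q₂ (by rw [← hγc₂]; exact hin)
      exact noLtm hP hc e₁ e₂ hltm

lemma mainAsym (hQ : Q.IsOpetope) (hP : P.IsOpetope) (hc : IsContraction Q P h)
    {j : ℕ} {p : P.P (j+1)} {q₁ q₂ : Q.P (j+1)}
    (e₁ : h (j+1) q₁ = ⟨j+1, p⟩) (e₂ : h (j+1) q₂ = ⟨j+1, p⟩)
    (hlt : Q.ltp j (Q.γ j q₁) (Q.γ j q₂)) :
    q₁ = q₂ ∨ Q.ltp (j+1) q₁ q₂ ∨ Q.ltp (j+1) q₂ q₁ := by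
  have fA₁ := factA hc q₁ p e₁
  have fA₂ := factA hc q₂ p e₂
  have hD := flatChain hP hc hlt (by rw [fA₁]) (fA₁.trans fA₂.symm)
  obtain ⟨a', hrt, hstep⟩ := Relation.TransGen.tail'_iff.mp hD
  obtain ⟨c, hac, hγc, hflat⟩ := hstep
  have hne : c ≠ q₂ := by
    intro e
    rw [e, e₂] at hflat
    dsimp at hflat
    omega
  rcases hQ.pencil_γ j c q₂ hγc with e | l | l
  · exact absurd e hne
  · exact vLemma hQ hP hc e₁ e₂ hrt c hac hflat l
  · exfalso
    have hdd := dimPres hc l (by rw [e₂])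
    omega

lemma mainLemma (hQ : Q.IsOpetope) (hP : P.IsOpetope) (hc : IsContraction Q P h) :
    ∀ (k : ℕ) (q₁ q₂ : Q.P k), (h k q₁).1 = k → (h k q₂).1 = k →
      h k q₁ = h k q₂ → q₁ = q₂ ∨ Q.ltp k q₁ q₂ ∨ Q.ltp k q₂ q₁ := by
  intro k
  induction k with
  | zero => intro q₁ q₂ _ _ _; exact hQ.strict0 q₁ q₂
  | succ j IH =>
    intro q₁ q₂ h₁ h₂ heq
    obtain ⟨p, e₁⟩ := exists_eq_of_dim (h := h) q₁ h₁
    have e₂ : h (j+1) q₂ = ⟨j+1, p⟩ := heq.symm.trans e₁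
    have fA₁ := factA hc q₁ p e₁
    have fA₂ := factA hc q₂ p e₂
    rcases IH (Q.γ j q₁) (Q.γ j q₂) (by rw [fA₁]) (by rw [fA₂])
        (fA₁.trans fA₂.symm) with e | l | l
    · exact hQ.pencil_γ j q₁ q₂ e
    · exact mainAsym hQ hP hc e₁ e₂ l
    · rcases mainAsym hQ hP hc e₂ e₁ l with e | l' | l'
      · exact Or.inl e.symm
      · exact Or.inr (Or.inr l')
      · exact Or.inr (Or.inl l')

end StmtAux

/-- Let `h : Q → P` be a contraction morphism of positive opetopes and
`q₁, q₂ ∈ Q − ker(h)` (non-collapsing faces).  If `h(q₁) = h(q₂)` then `q₁` and `q₂` are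
comparable in the upper order: `q₁ = q₂` or `q₁ <⁺ q₂` or `q₂ <⁺ q₁`. -/
theorem stmt_16 (Q P : PreOpetope) (hQ : Q.IsOpetope) (hP : P.IsOpetope)
    (h : ∀ k, Q.P k → Σ j, P.P j) (hc : IsContraction Q P h)
    (k : ℕ) (q₁ q₂ : Q.P k)
    (h₁ : (h k q₁).1 = k) (h₂ : (h k q₂).1 = k)
    (heq : h k q₁ = h k q₂) :
    q₁ = q₂ ∨ Q.ltp k q₁ q₂ ∨ Q.ltp k q₂ q₁ := by
  exact StmtAux.mainLemma hQ hP hc k q₁ q₂ h₁ h₂ heq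
end

section
/- Let h : Q → P be a contraction morphism of positive opetopes and p ∈ P_k. Then the set of non-collapsing k-faces in the fiber of h over p, namely h⁻¹(p) ∩ Q_k − ker(h), is a <⁺-interval: it is either empty or equals { x ∈ Q_k : x₀ ≤⁺ x ≤⁺ x₁ } for some x₀ ≤⁺ x₁, and it is linearly ordered by ≤⁺. -/
namespace Stmt17Aux
open Relation

section Opetope
variable {O : PreOpetope}

lemma ltp_step {k : ℕ} {a b : O.P k} (c : O.P (k+1)) (h1 : a ∈ O.δ k c)
    (h2 : O.γ k c = b) : O.ltp k a b :=
  TransGen.single ⟨c, h1, h2⟩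

lemma ltp_trans {k : ℕ} {a b c : O.P k} (h1 : O.ltp k a b) (h2 : O.ltp k b c) :
    O.ltp k a c := TransGen.trans h1 h2

lemma lep_trans {k : ℕ} {a b c : O.P k} (h1 : a = b ∨ O.ltp k a b)
    (h2 : b = c ∨ O.ltp k b c) : a = c ∨ O.ltp k a c := by
  rcases h1 with rfl | h1
  · exact h2
  · rcases h2 with rfl | h2
    · exact Or.inr h1
    · exact Or.inr (ltp_trans h1 h2)

lemma ltp_antisym (hO : O.IsOpetope) {k : ℕ} {a b : O.P k}
    (h1 : O.ltp k a b) (h2 : O.ltp k b a) : False :=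
  hO.strict k a (ltp_trans h1 h2)

lemma lep_antisym (hO : O.IsOpetope) {k : ℕ} {a b : O.P k}
    (h1 : a = b ∨ O.ltp k a b) (h2 : b = a ∨ O.ltp k b a) : a = b := by
  rcases h1 with rfl | h1
  · rfl
  · rcases h2 with rfl | h2
    · rfl
    · exact absurd (ltp_trans h1 h2) (hO.strict k a)

lemma wf_gtp (hO : O.IsOpetope) (k : ℕ) :
    WellFounded (fun a b : O.P k => O.ltp k b a) := by
  haveI := hO.fin k
  haveI : IsTrans (O.P k) (fun a b : O.P k => O.ltp k b a) :=
    ⟨fun _ _ _ h1 h2 => ltp_trans h2 h1⟩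
  haveI : IsIrrefl (O.P k) (fun a b : O.P k => O.ltp k b a) := ⟨fun a => hO.strict k a⟩
  exact Finite.wellFounded_of_trans_of_irrefl _

lemma wf_ltp (hO : O.IsOpetope) (k : ℕ) : WellFounded (O.ltp k) := by
  haveI := hO.fin k
  haveI : IsTrans (O.P k) (O.ltp k) := ⟨fun _ _ _ h1 h2 => ltp_trans h1 h2⟩
  haveI : IsIrrefl (O.P k) (O.ltp k) := ⟨fun a => hO.strict k a⟩
  exact Finite.wellFounded_of_trans_of_irrefl _

lemma ltm_gamma {k : ℕ} {a b : O.P (k+1)} (hab : O.ltm k a b) :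
    O.ltp k (O.γ k a) (O.γ k b) := by
  induction hab with
  | single hstep => exact ltp_step _ hstep rfl
  | tail _ hstep ih => exact ltp_trans ih (ltp_step _ hstep rfl)

lemma ltm_irrefl (hO : O.IsOpetope) {k : ℕ} {a : O.P (k+1)} (haa : O.ltm k a a) : False :=
  hO.strict k _ (ltm_gamma haa)

lemma ltm_trans {k : ℕ} {a b c : O.P (k+1)} (h1 : O.ltm k a b) (h2 : O.ltm k b c) :
    O.ltm k a c := TransGen.trans h1 h2

lemma wf_gtm (hO : O.IsOpetope) (k : ℕ) :
    WellFounded (fun a b : O.P (k+1) => O.ltm k b a) := by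
  haveI := hO.fin (k+1)
  haveI : IsTrans (O.P (k+1)) (fun a b : O.P (k+1) => O.ltm k b a) :=
    ⟨fun _ _ _ h1 h2 => ltm_trans h2 h1⟩
  haveI : IsIrrefl (O.P (k+1)) (fun a b : O.P (k+1) => O.ltm k b a) :=
    ⟨fun _ h => ltm_irrefl hO h⟩
  exact Finite.wellFounded_of_trans_of_irrefl _

/-- head decomposition of a transitive closure -/
lemma transGen_head {α : Sort*} {r : α → α → Prop} {a c : α} (hac : TransGen r a c) :
    ∃ b, r a b ∧ (b = c ∨ TransGen r b c) := by
  induction hac with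
  | single hstep => exact ⟨_, hstep, Or.inl rfl⟩
  | tail _ hstep ih =>
    obtain ⟨b, hab, hbc⟩ := ih
    rcases hbc with rfl | hbc
    · exact ⟨b, hab, Or.inr (TransGen.single hstep)⟩
    · exact ⟨b, hab, Or.inr (hbc.tail hstep)⟩

/-- γ is monotone w.r.t. `<⁺` : single step version. -/
lemma gamma_mono_step (hO : O.IsOpetope) {k : ℕ} {x y : O.P (k+1)} (g : O.P (k+2))
    (hx : x ∈ O.δ (k+1) g) (hy : O.γ (k+1) g = y) :
    O.γ k x = O.γ k y ∨ O.ltp k (O.γ k x) (O.γ k y) := by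
  subst hy
  -- prove for all w ∈ δ g by well-founded recursion on converse ltm
  have main : ∀ w : O.P (k+1), w ∈ O.δ (k+1) g →
      O.γ k w = O.γ k (O.γ (k+1) g) ∨ O.ltp k (O.γ k w) (O.γ k (O.γ (k+1) g)) := by
    intro w
    induction w using WellFounded.induction (wf_gtm hO k) with
    | _ w IH =>
      intro hw
      by_cases hmem : ∃ w' ∈ O.δ (k+1) g, O.γ k w ∈ O.δ k w'
      · obtain ⟨w', hw', hmem⟩ := hmem
        have hlt : O.ltp k (O.γ k w) (O.γ k w') := ltp_step w' hmem rfl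
        have := IH w' (TransGen.single hmem) hw'
        rcases this with heq | hlt'
        · exact Or.inr (heq ▸ hlt)
        · exact Or.inr (ltp_trans hlt hlt')
      · left
        have hset := hO.glob_γ k g
        have : O.γ k w ∈ {x | ∃ b ∈ O.δ (k+1) g, O.γ k b = x} \
            {x | ∃ b ∈ O.δ (k+1) g, x ∈ O.δ k b} := ⟨⟨w, hw, rfl⟩, hmem⟩
        have := hset ▸ this
        exact this
  exact main x hx

/-- γ is monotone w.r.t. `<⁺`. -/
lemma gamma_mono (hO : O.IsOpetope) {k : ℕ} {x y : O.P (k+1)} (hxy : O.ltp (k+1) x y) :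
    O.γ k x = O.γ k y ∨ O.ltp k (O.γ k x) (O.γ k y) := by
  induction hxy with
  | single hstep =>
    obtain ⟨g, hg1, hg2⟩ := hstep
    exact gamma_mono_step hO g hg1 hg2
  | tail _ hstep ih =>
    obtain ⟨g, hg1, hg2⟩ := hstep
    exact lep_trans ih (gamma_mono_step hO g hg1 hg2)

/-- Two faces with a common `≤⁺`-lower bound are `≤⁺`-comparable. -/
lemma common_lb (hO : O.IsOpetope) {k : ℕ} {z a b : O.P k}
    (hza : z = a ∨ O.ltp k z a) (hzb : z = b ∨ O.ltp k z b) :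
    a = b ∨ O.ltp k a b ∨ O.ltp k b a := by
  induction z using WellFounded.induction (wf_gtp hO k) with
  | _ z IH =>
    rcases hza with rfl | hza
    · rcases hzb with rfl | hzb
      · exact Or.inl rfl
      · exact Or.inr (Or.inl hzb)
    · rcases hzb with rfl | hzb
      · exact Or.inr (Or.inr hza)
      · obtain ⟨a₁, ⟨f₁, hzf, hfa⟩, ha₁⟩ := transGen_head hza
        obtain ⟨b₁, ⟨e₁, hze, heb⟩, hb₁⟩ := transGen_head hzb
        have ha₁' : a₁ = a ∨ O.ltp k a₁ a := ha₁
        have hb₁' : b₁ = b ∨ O.ltp k b₁ b := hb₁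
        rcases hO.pencil_δ k z f₁ e₁ hzf hze with rfl | hfe | hef
        · have : a₁ = b₁ := hfa ▸ heb ▸ rfl
          exact IH a₁ (ltp_step f₁ hzf hfa) ha₁' (this ▸ hb₁')
        · -- f₁ <⁺ e₁ : γ f₁ ≤⁺ γ e₁, i.e. a₁ ≤⁺ b₁
          have hab : a₁ = b₁ ∨ O.ltp k a₁ b₁ := by
            have := gamma_mono hO hfe
            rwa [hfa, heb] at this
          exact IH a₁ (ltp_step f₁ hzf hfa) ha₁' (lep_trans hab hb₁')
        · have hba : b₁ = a₁ ∨ O.ltp k b₁ a₁ := by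
            have := gamma_mono hO hef
            rwa [hfa, heb] at this
          exact IH b₁ (ltp_step e₁ hze heb) (lep_trans hba ha₁') hb₁'

end Opetope
end Stmt17Aux
namespace Stmt17Aux
open Relation

section Contr
variable {Q P : PreOpetope} {h : ∀ k, Q.P k → Σ j, P.P j}

lemma γdown_of_le {O : PreOpetope} : ∀ {l k : ℕ}, l ≤ k → ∀ (x : O.P l), O.γdown l x k = ⟨l, x⟩
  | 0, _, _, x => rfl
  | (l+1), k, hlk, x => by simp [PreOpetope.γdown, hlk]

lemma γdown_succ_eq {O : PreOpetope} {l k : ℕ} (hlk : ¬ (l+1 ≤ k)) (x : O.P (l+1)) :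
    O.γdown (l+1) x k = O.γdown l (O.γ l x) k := by simp [PreOpetope.γdown, hlk]

lemma sigma_ext {α : ℕ → Type} {k : ℕ} {a b : α k} (hab : (⟨k,a⟩ : Σ j, α j) = ⟨k,b⟩) :
    a = b := by simpa using hab

lemma sigma_of_fst {α : ℕ → Type} {s : Σ j, α j} {n : ℕ} (hs : s.1 = n) :
    ∃ v : α n, s = ⟨n, v⟩ := by
  rcases s with ⟨j, v⟩
  cases hs
  exact ⟨v, rfl⟩

/-- push of γ along a non-collapsing face -/
lemma push_nd (hc : IsContraction Q P h) {κ : ℕ} {e : Q.P (κ+1)} {E : P.P (κ+1)}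
    (he : h (κ+1) e = ⟨κ+1, E⟩) : h κ (Q.γ κ e) = ⟨κ, P.γ κ E⟩ := by
  have hg := hc.γ_pres (κ+1) κ e
  have hL : Q.γdown (κ+1) e κ = ⟨κ, Q.γ κ e⟩ := by
    rw [γdown_succ_eq (by omega), γdown_of_le (le_refl κ)]
  rw [hL, he] at hg
  have hR : P.γdown (κ+1) E κ = ⟨κ, P.γ κ E⟩ := by
    rw [γdown_succ_eq (by omega), γdown_of_le (le_refl κ)]
  simpa [hR] using hg

/-- push of γ along a collapsing face -/
lemma push_drop (hc : IsContraction Q P h) {κ : ℕ} {e : Q.P (κ+1)}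
    (hle : (h (κ+1) e).1 ≤ κ) : h κ (Q.γ κ e) = h (κ+1) e := by
  have hg := hc.γ_pres (κ+1) κ e
  have hL : Q.γdown (κ+1) e κ = ⟨κ, Q.γ κ e⟩ := by
    rw [γdown_succ_eq (by omega), γdown_of_le (le_refl κ)]
  rw [hL] at hg
  rw [γdown_of_le hle] at hg
  simpa using hg

/-- monotonicity, single step -/
lemma mono_step (hc : IsContraction Q P h) {κ : ℕ} {x y : Q.P κ} {vx : P.P κ}
    (e : Q.P (κ+1)) (hxe : x ∈ Q.δ κ e) (hey : Q.γ κ e = y) (hx : h κ x = ⟨κ, vx⟩) :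
    ∃ vy, h κ y = ⟨κ, vy⟩ ∧ (vx = vy ∨ P.ltp κ vx vy) := by
  have hdim := hc.dim_le (κ+1) e
  rcases lt_trichotomy ((h (κ+1) e).1) κ with hlt | heq | hgt
  · exact absurd (hc.δ_low κ e hlt x hxe) (by rw [hx]; simp)
  · -- drop
    have hmt := (hc.δ_drop κ e heq).mapsTo ⟨hxe, by rw [hx]⟩
    have hxe' : h κ x = h (κ+1) e := hmt
    have hy : h κ y = h (κ+1) e := hey ▸ push_drop hc (le_of_eq heq)
    exact ⟨vx, by rw [hy, ← hxe', hx], Or.inl rfl⟩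
  · have he1 : (h (κ+1) e).1 = κ + 1 := by omega
    obtain ⟨E, hE⟩ := sigma_of_fst he1
    have hmt := (hc.δ_eq κ e E hE).mapsTo ⟨hxe, by rw [hx]⟩
    obtain ⟨y', hy', hyx⟩ := hmt
    have hvx : vx = y' := by
      rw [hx] at hyx
      exact sigma_ext hyx
    have hy : h κ y = ⟨κ, P.γ κ E⟩ := hey ▸ push_nd hc hE
    exact ⟨P.γ κ E, hy, Or.inr (ltp_step E (hvx ▸ hy') rfl)⟩

/-- monotonicity along `<⁺` chains -/
lemma mono_chain (hc : IsContraction Q P h) {κ : ℕ} {x y : Q.P κ} {vx : P.P κ}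
    (hxy : Q.ltp κ x y) (hx : h κ x = ⟨κ, vx⟩) :
    ∃ vy, h κ y = ⟨κ, vy⟩ ∧ (vx = vy ∨ P.ltp κ vx vy) := by
  induction hxy with
  | single hstep =>
    obtain ⟨e, h1, h2⟩ := hstep
    exact mono_step hc e h1 h2 hx
  | tail _ hstep ih =>
    obtain ⟨vz, hz, hvz⟩ := ih
    obtain ⟨e, h1, h2⟩ := hstep
    obtain ⟨vy, hy, hvy⟩ := mono_step hc e h1 h2 hz
    exact ⟨vy, hy, lep_trans hvz hvy⟩

/-- fiber elements between two fiber elements lie in the fiber -/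
lemma fiber_convex (hP : P.IsOpetope) (hc : IsContraction Q P h) {κ : ℕ}
    {x y z : Q.P κ} {v : P.P κ} (hx : h κ x = ⟨κ, v⟩) (hy : h κ y = ⟨κ, v⟩)
    (h1 : x = z ∨ Q.ltp κ x z) (h2 : z = y ∨ Q.ltp κ z y) : h κ z = ⟨κ, v⟩ := by
  rcases h1 with rfl | h1
  · exact hx
  rcases h2 with rfl | h2
  · exact hy
  obtain ⟨t, ht, hvt⟩ := mono_chain hc h1 hx
  obtain ⟨s, hs, hts⟩ := mono_chain hc h2 ht
  have hsv : s = v := sigma_ext (hs.symm.trans hy)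
  have htv : v = t := lep_antisym hP hvt (hsv ▸ hts)
  rw [ht, ← htv]

end Contr
end Stmt17Aux
namespace Stmt17Aux
open Relation

section Shadow
variable {Q P : PreOpetope} {h : ∀ k, Q.P k → Σ j, P.P j}

/-- Shadow lemma: `<⁻`-related non-collapsing faces have strictly `<⁺`-related
codomains of their images. -/
lemma shadow (hc : IsContraction Q P h) {κ : ℕ} {a v : Q.P (κ+1)}
    {pa pv : P.P (κ+1)} (hav : Q.ltm κ a v) (ha : h (κ+1) a = ⟨κ+1, pa⟩)
    (hv : h (κ+1) v = ⟨κ+1, pv⟩) : P.ltp κ (P.γ κ pa) (P.γ κ pv) := by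
  set Ψ : Q.P (κ+1) → Prop := fun x =>
    (∃ w, h (κ+1) x = ⟨κ+1, w⟩ ∧ P.ltp κ (P.γ κ pa) (P.γ κ w)) ∨
    (∃ w : P.P κ, h (κ+1) x = ⟨κ, w⟩ ∧ (P.γ κ pa = w ∨ P.ltp κ (P.γ κ pa) w)) with hΨ
  have hmain : Ψ v := by
    clear hv
    induction hav with
    | @single x hstep =>
      have hγa : h κ (Q.γ κ a) = ⟨κ, P.γ κ pa⟩ := push_nd hc ha
      rcases lt_trichotomy ((h (κ+1) x).1) κ with hlt | heq | hgt
      · exact absurd (hc.δ_low κ x hlt _ hstep) (by rw [hγa]; simp)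
      · have hmt := (hc.δ_drop κ x heq).mapsTo ⟨hstep, by rw [hγa]⟩
        right
        exact ⟨P.γ κ pa, (hmt : h κ (Q.γ κ a) = h (κ+1) x) ▸ hγa ▸ rfl, Or.inl rfl⟩
      · have hx1 : (h (κ+1) x).1 = κ + 1 := by have := hc.dim_le (κ+1) x; omega
        obtain ⟨X, hX⟩ := sigma_of_fst hx1
        obtain ⟨y', hy', hyx⟩ := (hc.δ_eq κ x X hX).mapsTo ⟨hstep, by rw [hγa]⟩
        have : P.γ κ pa = y' := sigma_ext (hγa ▸ hyx)
        exact Or.inl ⟨X, hX, ltp_step X (this ▸ hy') rfl⟩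
    | @tail x y hprev hstep IH =>
      -- extract the κ-dimensional shadow of x
      have hsh : ∃ t, h κ (Q.γ κ x) = ⟨κ, t⟩ ∧ (P.γ κ pa = t ∨ P.ltp κ (P.γ κ pa) t) := by
        rcases IH with ⟨w, hw, hlt⟩ | ⟨w, hw, hle⟩
        · exact ⟨P.γ κ w, push_nd hc hw, Or.inr hlt⟩
        · have : h κ (Q.γ κ x) = h (κ+1) x := push_drop hc (by rw [hw])
          exact ⟨w, this.trans hw, hle⟩
      obtain ⟨t, ht, hle⟩ := hsh
      rcases lt_trichotomy ((h (κ+1) y).1) κ with hlt | heq | hgt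
      · exact absurd (hc.δ_low κ y hlt _ hstep) (by rw [ht]; simp)
      · have hmt := (hc.δ_drop κ y heq).mapsTo ⟨hstep, by rw [ht]⟩
        right
        exact ⟨t, ((hmt : h κ (Q.γ κ x) = h (κ+1) y).symm.trans ht).symm ▸ rfl, hle⟩
      · have hy1 : (h (κ+1) y).1 = κ + 1 := by have := hc.dim_le (κ+1) y; omega
        obtain ⟨Y, hY⟩ := sigma_of_fst hy1
        obtain ⟨y', hy', hyx⟩ := (hc.δ_eq κ y Y hY).mapsTo ⟨hstep, by rw [ht]⟩
        have hty : t = y' := sigma_ext (ht ▸ hyx)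
        have hstep' : P.ltp κ t (P.γ κ Y) := ltp_step Y (hty ▸ hy') rfl
        left
        refine ⟨Y, hY, ?_⟩
        rcases hle with rfl | hle
        · exact hstep'
        · exact ltp_trans hle hstep'
  rcases hmain with ⟨w, hw, hlt⟩ | ⟨w, hw, _⟩
  · have : w = pv := sigma_ext (hw.symm.trans hv)
    exact this ▸ hlt
  · exact absurd (congrArg Sigma.fst (hw.symm.trans hv)) (by simp)

end Shadow
end Stmt17Aux
namespace Stmt17Aux
open Relation

/-- Chains of faces collapsing onto `gp`, starting at `a`. -/
def Chn (Q P : PreOpetope) (h : ∀ k, Q.P k → Σ j, P.P j) (κ : ℕ) (gp : P.P κ)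
    (a : Q.P (κ+1)) : ℕ → Q.P (κ+1) → Prop
  | 0, c => c = a
  | (n+1), c => ∃ v, Chn Q P h κ gp a n v ∧
      (Q.γ κ v ∈ Q.δ κ c ∧ h (κ+1) c = ⟨κ, gp⟩)

section Main
variable {Q P : PreOpetope} {h : ∀ k, Q.P k → Σ j, P.P j}

lemma chn_drop {κ : ℕ} {gp : P.P κ} {a c : Q.P (κ+1)} {n : ℕ}
    (hch : Chn Q P h κ gp a (n+1) c) : h (κ+1) c = ⟨κ, gp⟩ := by
  obtain ⟨v, _, _, hdrop⟩ := hch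
  exact hdrop

lemma chn_ltm {κ : ℕ} {gp : P.P κ} {a : Q.P (κ+1)} :
    ∀ {n : ℕ} {c : Q.P (κ+1)}, Chn Q P h κ gp a (n+1) c → Q.ltm κ a c := by
  intro n
  induction n with
  | zero =>
    rintro c ⟨v, rfl, hmem, _⟩
    exact TransGen.single hmem
  | succ n ih =>
    rintro c ⟨v, hv, hmem, _⟩
    exact TransGen.tail (ih hv) hmem

/-- The main recursion: if `c` is the end of a collapsing chain from `a` over `γ p`
and `c <⁺ b`, with `a, b` in the fiber over `p`, then `a` and `b` are comparable. -/
lemma rec_main (hQ : Q.IsOpetope) (hP : P.IsOpetope) (hc : IsContraction Q P h)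
    {κ : ℕ} {p : P.P (κ+1)} {a b : Q.P (κ+1)}
    (ha : h (κ+1) a = ⟨κ+1, p⟩) (hb : h (κ+1) b = ⟨κ+1, p⟩) :
    ∀ (M : ℕ) (c : Q.P (κ+1)), Chn Q P h κ (P.γ κ p) a M c → Q.ltp (κ+1) c b →
      (a = b ∨ Q.ltp (κ+1) a b ∨ Q.ltp (κ+1) b a) := by
  intro M
  induction M using Nat.strong_induction_on with
  | _ M IHM =>
    intro c
    refine (wf_gtp hQ (κ+1)).induction
      (C := fun c => Chn Q P h κ (P.γ κ p) a M c → Q.ltp (κ+1) c b →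
        (a = b ∨ Q.ltp (κ+1) a b ∨ Q.ltp (κ+1) b a)) c ?_
    clear c
    intro c IHc hch hcb
    rcases M with _ | N
    · -- `c = a`, so `a <⁺ b`
      have hca : c = a := hch
      exact Or.inr (Or.inl (hca ▸ hcb))
    obtain ⟨v, hvN, hγv, hcdrop⟩ := hch
    -- the `κ`-shadow of `v` lies in the fiber over `γ p`
    have hu : h κ (Q.γ κ v) = ⟨κ, P.γ κ p⟩ := by
      rcases N with _ | N'
      · have hva : v = a := hvN
        rw [hva]
        exact push_nd hc ha
      · have hvdrop := chn_drop hvN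
        have := push_drop hc (le_of_eq (by rw [hvdrop]))
        rw [this, hvdrop]
    -- a helper: if `v <⁺ b` then we are done, by the outer induction
    have hvdone : Q.ltp (κ+1) v b → (a = b ∨ Q.ltp (κ+1) a b ∨ Q.ltp (κ+1) b a) := by
      intro hvb
      exact IHM N (by omega) v hvN hvb
    -- decompose `c <⁺ b`
    obtain ⟨y₁, ⟨e₁, hce, hey⟩, hy₁b⟩ := transGen_head hcb
    by_cases hzcase : ∃ z ∈ Q.δ (κ+1) e₁, Q.γ κ z = Q.γ κ v
    · -- case β
      obtain ⟨z, hze, hzu⟩ := hzcase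
      have hzy : Q.ltp (κ+1) z y₁ := ltp_step e₁ hze hey
      have hzb : Q.ltp (κ+1) z b := by
        rcases hy₁b with rfl | hy₁b
        · exact hzy
        · exact ltp_trans hzy hy₁b
      rcases hQ.pencil_γ κ z v hzu with rfl | hzv | hvz
      · exact hvdone hzb
      · -- z <⁺ v and z <⁺ b : v and b are comparable
        rcases common_lb hQ (Or.inr hzv) (Or.inr hzb) with rfl | hvb | hbv
        · -- v = b
          rcases N with _ | N'
          · have hva : v = a := hvN
            exact Or.inl hva.symm
          · have hvdrop := chn_drop hvN
            exact absurd (congrArg Sigma.fst (hvdrop.symm.trans hb)) (by simp)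
        · exact hvdone hvb
        · -- b <⁺ v
          rcases N with _ | N'
          · have hva : v = a := hvN
            exact Or.inr (Or.inr (hva ▸ hbv))
          · have hvdrop := chn_drop hvN
            obtain ⟨t, hvt, _⟩ := mono_chain hc hbv hb
            exact absurd (congrArg Sigma.fst (hvt.symm.trans hvdrop)) (by simp)
      · exact hvdone (ltp_trans hvz hzb)
    · -- case α : γ v ∈ δ y₁
      have humem : Q.γ κ v ∈ Q.δ κ y₁ := by
        have hset := hQ.glob_δ κ e₁
        have hin : Q.γ κ v ∈ Q.δ κ (Q.γ (κ+1) e₁) := by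
          rw [hset]
          exact ⟨⟨c, hce, hγv⟩, hzcase⟩
        rwa [hey] at hin
      rcases lt_trichotomy ((h (κ+1) y₁).1) κ with hlt | heq | hgt
      · exact absurd (hc.δ_low κ y₁ hlt _ humem) (by rw [hu]; simp)
      · -- y₁ collapses onto γ p as well: extend the chain
        have hmt := (hc.δ_drop κ y₁ heq).mapsTo ⟨humem, by rw [hu]⟩
        have hydrop : h (κ+1) y₁ = ⟨κ, P.γ κ p⟩ :=
          ((hmt : h κ (Q.γ κ v) = h (κ+1) y₁).symm.trans hu)
        have hy₁b' : Q.ltp (κ+1) y₁ b := by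
          rcases hy₁b with rfl | hy₁b
          · exact absurd (congrArg Sigma.fst (hydrop.symm.trans hb)) (by simp)
          · exact hy₁b
        exact IHc y₁ (ltp_step e₁ hce hey) ⟨v, hvN, humem, hydrop⟩ hy₁b'
      · -- y₁ is non-collapsing: contradiction
        have hy1 : (h (κ+1) y₁).1 = κ + 1 := by
          have := hc.dim_le (κ+1) y₁
          omega
        obtain ⟨r, hr⟩ := sigma_of_fst hy1
        obtain ⟨y', hy'δ, heq2⟩ := (hc.δ_eq κ y₁ r hr).mapsTo ⟨humem, by rw [hu]⟩
        have hgy : P.γ κ p = y' := sigma_ext (hu ▸ heq2)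
        have hgpr : P.ltp κ (P.γ κ p) (P.γ κ r) := ltp_step r (hgy ▸ hy'δ) rfl
        have hrp : r = p ∨ P.ltp (κ+1) r p := by
          rcases hy₁b with rfl | hy₁b
          · exact Or.inl (sigma_ext (hr.symm.trans hb))
          · obtain ⟨t, hbt, hrt⟩ := mono_chain hc hy₁b hr
            have : t = p := sigma_ext (hbt.symm.trans hb)
            exact this ▸ hrt
        rcases hrp with rfl | hrp
        · exact absurd hgpr (hP.strict κ _)
        · rcases gamma_mono hP hrp with hgeq | hglt
          · exact absurd (hgeq ▸ hgpr) (hP.strict κ _)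
          · exact absurd (ltp_trans hgpr hglt) (hP.strict κ _)

end Main
end Stmt17Aux
namespace Stmt17Aux
open Relation

section Build
variable {Q P : PreOpetope} {h : ∀ k, Q.P k → Σ j, P.P j}

/-- Construction of a collapsing chain covering a `<⁺`-interval between `γ a`
and `γ b` in the fiber over `γ p`. -/
lemma build (hQ : Q.IsOpetope) (hP : P.IsOpetope) (hc : IsContraction Q P h)
    {κ : ℕ} {p : P.P (κ+1)} {a b : Q.P (κ+1)}
    (ha : h (κ+1) a = ⟨κ+1, p⟩) (hb : h (κ+1) b = ⟨κ+1, p⟩) :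
    ∀ z : Q.P κ, Q.ltp κ (Q.γ κ a) z → (z = Q.γ κ b ∨ Q.ltp κ z (Q.γ κ b)) →
      ∃ N c, Chn Q P h κ (P.γ κ p) a (N+1) c ∧ Q.γ κ c = z := by
  have hga : h κ (Q.γ κ a) = ⟨κ, P.γ κ p⟩ := push_nd hc ha
  have hgb : h κ (Q.γ κ b) = ⟨κ, P.γ κ p⟩ := push_nd hc hb
  intro z hlt
  induction hlt with
  | @single z hstep =>
    intro hbound
    obtain ⟨e, hae, hez⟩ := hstep
    have hfull : Q.ltp κ (Q.γ κ a) z := TransGen.single ⟨e, hae, hez⟩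
    have hfib : h κ z = ⟨κ, P.γ κ p⟩ :=
      fiber_convex hP hc hga hgb (Or.inr hfull) hbound
    have hγe : h κ (Q.γ κ e) = ⟨κ, P.γ κ p⟩ := hez ▸ hfib
    rcases Nat.lt_or_ge ((h (κ+1) e).1) (κ+1) with hle | hge
    · have hedrop : h (κ+1) e = ⟨κ, P.γ κ p⟩ :=
        (push_drop hc (by omega)).symm.trans hγe
      exact ⟨0, e, ⟨a, rfl, hae, hedrop⟩, hez⟩
    · have he1 : (h (κ+1) e).1 = κ+1 := le_antisymm (hc.dim_le (κ+1) e) hge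
      obtain ⟨s, hs⟩ := sigma_of_fst he1
      have hγs : P.γ κ s = P.γ κ p := sigma_ext ((push_nd hc hs).symm.trans hγe)
      have := shadow hc (TransGen.single hae : Q.ltm κ a e) ha hs
      exact absurd (hγs ▸ this) (hP.strict κ _)
  | @tail z' z hprev hstep ih =>
    intro hbound
    obtain ⟨e, hz'e, hez⟩ := hstep
    have hbound' : z' = Q.γ κ b ∨ Q.ltp κ z' (Q.γ κ b) := by
      have hz'z : Q.ltp κ z' z := ltp_step e hz'e hez
      rcases hbound with rfl | hbound
      · exact Or.inr hz'z
      · exact Or.inr (ltp_trans hz'z hbound)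
    obtain ⟨N, c', hc', hγc'⟩ := ih hbound'
    have hfull : Q.ltp κ (Q.γ κ a) z := TransGen.tail hprev ⟨e, hz'e, hez⟩
    have hfib : h κ z = ⟨κ, P.γ κ p⟩ :=
      fiber_convex hP hc hga hgb (Or.inr hfull) hbound
    have hγe : h κ (Q.γ κ e) = ⟨κ, P.γ κ p⟩ := hez ▸ hfib
    rcases Nat.lt_or_ge ((h (κ+1) e).1) (κ+1) with hle | hge
    · have hedrop : h (κ+1) e = ⟨κ, P.γ κ p⟩ :=
        (push_drop hc (by omega)).symm.trans hγe
      exact ⟨N+1, e, ⟨c', hc', by rw [hγc']; exact hz'e, hedrop⟩, hez⟩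
    · have he1 : (h (κ+1) e).1 = κ+1 := le_antisymm (hc.dim_le (κ+1) e) hge
      obtain ⟨s, hs⟩ := sigma_of_fst he1
      have hγs : P.γ κ s = P.γ κ p := sigma_ext ((push_nd hc hs).symm.trans hγe)
      have hltm : Q.ltm κ a e := TransGen.tail (chn_ltm hc') (by rw [hγc']; exact hz'e)
      have := shadow hc hltm ha hs
      exact absurd (hγs ▸ this) (hP.strict κ _)

/-- comparability of fiber elements, given the codomains are strictly related -/
lemma core (hQ : Q.IsOpetope) (hP : P.IsOpetope) (hc : IsContraction Q P h)
    {κ : ℕ} {p : P.P (κ+1)} {a b : Q.P (κ+1)}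
    (ha : h (κ+1) a = ⟨κ+1, p⟩) (hb : h (κ+1) b = ⟨κ+1, p⟩)
    (hγ : Q.ltp κ (Q.γ κ a) (Q.γ κ b)) :
    a = b ∨ Q.ltp (κ+1) a b ∨ Q.ltp (κ+1) b a := by
  obtain ⟨N, c, hch, hγc⟩ := build hQ hP hc ha hb (Q.γ κ b) hγ (Or.inl rfl)
  have hcdrop := chn_drop hch
  rcases hQ.pencil_γ κ c b hγc with rfl | hcb | hbc
  · exact absurd (congrArg Sigma.fst (hcdrop.symm.trans hb)) (by simp)
  · exact rec_main hQ hP hc ha hb (N+1) c hch hcb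
  · obtain ⟨t, hct, _⟩ := mono_chain hc hbc hb
    exact absurd (congrArg Sigma.fst (hct.symm.trans hcdrop)) (by simp)

/-- `<⁺`-linearity of the non-collapsing part of any fiber of a contraction. -/
lemma linear (hQ : Q.IsOpetope) (hP : P.IsOpetope) (hc : IsContraction Q P h) :
    ∀ (κ : ℕ) (p : P.P κ) (a b : Q.P κ), h κ a = ⟨κ, p⟩ → h κ b = ⟨κ, p⟩ →
      a = b ∨ Q.ltp κ a b ∨ Q.ltp κ b a := by
  intro κ
  induction κ with
  | zero => exact fun _ a b _ _ => hQ.strict0 a b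
  | succ m IH =>
    intro p a b ha hb
    have hga : h m (Q.γ m a) = ⟨m, P.γ m p⟩ := push_nd hc ha
    have hgb : h m (Q.γ m b) = ⟨m, P.γ m p⟩ := push_nd hc hb
    rcases IH (P.γ m p) (Q.γ m a) (Q.γ m b) hga hgb with heq | hab | hba
    · exact hQ.pencil_γ m a b heq
    · exact core hQ hP hc ha hb hab
    · rcases core hQ hP hc hb ha hba with heq | h1 | h2
      · exact Or.inl heq.symm
      · exact Or.inr (Or.inr h1)
      · exact Or.inr (Or.inl h2)

end Build
end Stmt17Aux
/-- Let `h : Q → P` be a contraction morphism of positive opetopes and `p ∈ P_k`.  The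
set of non-collapsing `k`-faces in the fiber of `h` over `p` is a `<⁺`-interval: it is
empty or of the form `{ x : x₀ ≤⁺ x ≤⁺ x₁ }`, and it is linearly ordered by `≤⁺`. -/
theorem stmt_17 (Q P : PreOpetope) (hQ : Q.IsOpetope) (hP : P.IsOpetope)
    (h : ∀ k, Q.P k → Σ j, P.P j) (hc : IsContraction Q P h)
    (k : ℕ) (p : P.P k) :
    let F : Set (Q.P k) := {x | h k x = ⟨k, p⟩}
    (F = ∅ ∨ ∃ x₀ ∈ F, ∃ x₁ ∈ F, (x₀ = x₁ ∨ Q.ltp k x₀ x₁) ∧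
        F = {x : Q.P k | (x₀ = x ∨ Q.ltp k x₀ x) ∧ (x = x₁ ∨ Q.ltp k x x₁)}) ∧
    (∀ a ∈ F, ∀ b ∈ F, a = b ∨ Q.ltp k a b ∨ Q.ltp k b a) := by
  intro F
  have hlin : ∀ a ∈ F, ∀ b ∈ F, a = b ∨ Q.ltp k a b ∨ Q.ltp k b a :=
    fun a haF b hbF => Stmt17Aux.linear hQ hP hc k p a b haF hbF
  refine ⟨?_, hlin⟩
  by_cases hF : F = ∅
  · exact Or.inl hF
  right
  have hne : F.Nonempty := Set.nonempty_iff_ne_empty.mpr hF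
  obtain ⟨x₀, hx₀F, hx₀min⟩ := (Stmt17Aux.wf_ltp hQ k).has_min F hne
  obtain ⟨x₁, hx₁F, hx₁max⟩ := (Stmt17Aux.wf_gtp hQ k).has_min F hne
  have hmin : ∀ y ∈ F, x₀ = y ∨ Q.ltp k x₀ y := by
    intro y hy
    rcases hlin x₀ hx₀F y hy with heq | hlt | hlt
    · exact Or.inl heq
    · exact Or.inr hlt
    · exact absurd hlt (hx₀min y hy)
  have hmax : ∀ y ∈ F, y = x₁ ∨ Q.ltp k y x₁ := by
    intro y hy
    rcases hlin y hy x₁ hx₁F with heq | hlt | hlt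
    · exact Or.inl heq
    · exact Or.inr hlt
    · exact absurd hlt (hx₁max y hy)
  refine ⟨x₀, hx₀F, x₁, hx₁F, hmin x₁ hx₁F, ?_⟩
  ext x
  simp only [Set.mem_setOf_eq]
  constructor
  · intro hx
    exact ⟨hmin x hx, hmax x hx⟩
  · rintro ⟨h1, h2⟩
    show h k x = ⟨k, p⟩
    exact Stmt17Aux.fiber_convex hP hc (hx₀F : h k x₀ = ⟨k, p⟩)
      (hx₁F : h k x₁ = ⟨k, p⟩) h1 h2
end
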